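/- arXiv:2602.06747 — 6 statements merged into one kernel-verified Lean document; each statement's English description precedes it below -/
import Mathlib

section
/- For any hypergraph H = (V, E) and any positive integer k, the number of proper k-colorings of H equals the sum over all subsets S of E of (-1)^{|S|} · k^{|V| - n(S) + c(S)}, where n(S) is the number of vertices covered by edges in S and c(S) is the number of connected components of the subhypergraph (with vertex set the vertices covered by S) induced by S. -/
/-
Common definitions: a hypergraph on a finite vertex type `V` is given by its
edge set `E : Finset (Finset V)` (each edge of size ≥ 2).
-/

noncomputable section
open Finset

attribute [local instance] Classical.propDecidable

variable {V : Type*}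

/-- A proper `k`-coloring of the hypergraph with edge set `E`: every edge
contains two vertices with different colors. -/
def ProperColoring (E : Finset (Finset V)) (k : ℕ) (f : V → Fin k) : Prop :=
  ∀ e ∈ E, ∃ u ∈ e, ∃ v ∈ e, f u ≠ f v

/-- The number of proper `k`-colorings (the chromatic polynomial evaluated at `k`). -/
def chromPoly [Fintype V] (E : Finset (Finset V)) (k : ℕ) : ℕ :=
  Nat.card {f : V → Fin k // ProperColoring E k f}

/-- `n(S)`: the number of vertices covered by the edges of `S`. -/
def nVerts [DecidableEq V] (S : Finset (Finset V)) : ℕ := (S.biUnion id).card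

/-- One-step connectivity via an edge of `S`. -/
def connStep (S : Finset (Finset V)) (u v : V) : Prop := ∃ e ∈ S, u ∈ e ∧ v ∈ e

/-- Connectivity via a chain of edges of `S`. -/
def connRel (S : Finset (Finset V)) : V → V → Prop := Relation.ReflTransGen (connStep S)

/-- `c(S)`: the number of connected components of the subhypergraph induced by `S`
(on the vertices covered by `S`). -/
def nComps [DecidableEq V] (S : Finset (Finset V)) : ℕ :=
  Nat.card (Quot (fun a b : {v : V // v ∈ S.biUnion id} => connRel S a.1 b.1))

/-- The number of connected components of the spanning subhypergraph `(V, S)`. -/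
def nCompsFull (S : Finset (Finset V)) : ℕ := Nat.card (Quot (connRel S))

/-- A hypergraph is linear if two distinct edges meet in at most one vertex. -/
def Linear [DecidableEq V] (E : Finset (Finset V)) : Prop :=
  ∀ e ∈ E, ∀ e' ∈ E, e ≠ e' → (e ∩ e').card ≤ 1

/-- `r`-uniform: every edge has exactly `r` vertices. -/
def Uniform (E : Finset (Finset V)) (r : ℕ) : Prop := ∀ e ∈ E, e.card = r

/-- The hypergraph `(V, E)` is connected. -/
def Connected (E : Finset (Finset V)) : Prop := ∀ u v : V, connRel E u v

/-- There is a cycle of length `p` with all edges drawn from `D`: distinct vertices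
`v_1, …, v_p` and distinct edges `e_1, …, e_p` with `{v_{i-1}, v_i} ⊆ e_i` (cyclically). -/
def IsCycle (D : Finset (Finset V)) (p : ℕ) : Prop :=
  2 ≤ p ∧ ∃ (vs : ZMod p → V) (es : ZMod p → Finset V),
    Function.Injective vs ∧ Function.Injective es ∧
    ∀ i, es i ∈ D ∧ vs i ∈ es i ∧ vs i ∈ es (i + 1)

/-- There is a cycle of length `p` through the edge `e`, with all edges drawn from `D`. -/
def CycleThrough (D : Finset (Finset V)) (e : Finset V) (p : ℕ) : Prop :=
  2 ≤ p ∧ ∃ (vs : ZMod p → V) (es : ZMod p → Finset V),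
    Function.Injective vs ∧ Function.Injective es ∧ (∃ i, es i = e) ∧
    ∀ i, es i ∈ D ∧ vs i ∈ es i ∧ vs i ∈ es (i + 1)

/-- The domain of a partial map `V ⇀ Fin k`. -/
def pmDom [Fintype V] {k : ℕ} (φ : V → Option (Fin k)) : Finset V :=
  univ.filter (fun v => (φ v).isSome)

/-- `F` is a `k`-fold cover of the hypergraph with edge set `E`: domains are edges, and
distinct members with the same domain are disjoint as sets of (vertex, color) pairs. -/
def IsCover [Fintype V] (E : Finset (Finset V)) (k : ℕ)
    (F : Finset (V → Option (Fin k))) : Prop :=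
  (∀ φ ∈ F, pmDom φ ∈ E) ∧
    ∀ φ ∈ F, ∀ ψ ∈ F, φ ≠ ψ → pmDom φ = pmDom ψ → ∀ v c, φ v = some c → ψ v ≠ some c

/-- `φ ⊆ f` as graphs of partial maps. -/
def SubMap {k : ℕ} (φ : V → Option (Fin k)) (f : V → Fin k) : Prop :=
  ∀ v c, φ v = some c → f v = c

/-- The number of `F`-colorings: total colorings avoiding every member of `F`. -/
def dpCount [Fintype V] (k : ℕ) (F : Finset (V → Option (Fin k))) : ℕ :=
  Nat.card {f : V → Fin k // ∀ φ ∈ F, ¬ SubMap φ f}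

/-- The DP color function: the minimum of `dpCount` over all `k`-fold covers. -/
def dpPoly [Fintype V] (E : Finset (Finset V)) (k : ℕ) : ℕ :=
  sInf {n | ∃ F, IsCover E k F ∧ n = dpCount k F}

/-- The natural `k`-cover: for each edge `e` and color `i`, the constant map `e ↦ i`. -/
def natCover [Fintype V] [DecidableEq V] (E : Finset (Finset V)) (k : ℕ) :
    Finset (V → Option (Fin k)) :=
  E.biUnion fun e => (univ : Finset (Fin k)).image fun i v => if v ∈ e then some i else none

/-- The join `H ∨ K_p`, realized on the vertex type `V ⊕ Fin p`. -/
def joinK [Fintype V] [DecidableEq V] (E : Finset (Finset V)) (p : ℕ) :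
    Finset (Finset (V ⊕ Fin p)) :=
  E.image (Finset.image Sum.inl) ∪
    (univ : Finset (V × Fin p)).image (fun x => {Sum.inl x.1, Sum.inr x.2}) ∪
    ((univ : Finset (Fin p × Fin p)).filter (fun x => x.1 ≠ x.2)).image
      (fun x => ({Sum.inr x.1, Sum.inr x.2} : Finset (V ⊕ Fin p)))

/-- The join `K₁ ∨ H`, realized on `Option V` with new vertex `none`. -/
def joinOne [Fintype V] [DecidableEq V] (E : Finset (Finset V)) : Finset (Finset (Option V)) :=
  E.image (Finset.image some) ∪
    (univ : Finset V).image (fun v => ({none, some v} : Finset (Option V)))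

/-- The number of neighbors of `σ i` among `σ j`, `j < i`. -/
def backDeg [Fintype V] (E : Finset (Finset V)) (σ : Fin (Fintype.card V) ≃ V)
    (i : Fin (Fintype.card V)) : ℕ :=
  (univ.filter fun j => j < i ∧ σ j ≠ σ i ∧ ∃ e ∈ E, σ i ∈ e ∧ σ j ∈ e).card

/-- There is an ordering witnessing coloring number at most `d`. -/
def HasColOrd [Fintype V] (E : Finset (Finset V)) (d : ℕ) : Prop :=
  ∃ σ : Fin (Fintype.card V) ≃ V, ∀ i, backDeg E σ i ≤ d - 1

/-- The coloring number `col(H)`. -/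
def colNum [Fintype V] (E : Finset (Finset V)) : ℕ := sInf {d | HasColOrd E d}

/-- `Φ_j` is a level mapping for the cover `F` of `K₁ ∨ H`: for each original edge `e`
there is a member of `F` with domain `e` agreeing, at every vertex of `e`, with the
member of `F` on the edge `{w, v}` sending `w = none` to `j`. -/
def LevelMap [Fintype V] [DecidableEq V] (E : Finset (Finset V)) (k : ℕ)
    (F : Finset (Option V → Option (Fin k))) (j : Fin k) : Prop :=
  ∀ e ∈ E, ∃ ψ ∈ F, pmDom ψ = e.image some ∧
    ∀ v ∈ e, ∀ φ ∈ F,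
      (pmDom φ = ({none, some v} : Finset (Option V)) ∧ φ none = some j) →
        ψ (some v) = φ (some v)

/-
Inclusion–exclusion over the events that an edge is monochromatic: the proper colorings
are those avoiding all of them, and a coloring that is monochromatic on every edge of `S` is
constant on each connected component of `S`, so it is a free choice of one color per
component and one per vertex not covered by `S`.
-/

variable {α : Type*}

def Monochromatic (f : V → α) (e : Finset V) : Prop := ∀ u ∈ e, ∀ v ∈ e, f u = f v

lemma properColoring_iff_forall_not_monochromatic {E : Finset (Finset V)} {k : ℕ}
    {f : V → Fin k} : ProperColoring E k f ↔ ∀ e ∈ E, ¬ Monochromatic f e := by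
  simp only [ProperColoring, Monochromatic, not_forall, exists_prop]

lemma connRel.eq_of_forall_monochromatic {S : Finset (Finset V)} {u v : V}
    (h : connRel S u v) {f : V → α} (hf : ∀ e ∈ S, Monochromatic f e) : f u = f v := by
  induction h with
  | refl => rfl
  | tail _ step ih =>
    obtain ⟨e, he, hu, hv⟩ := step
    exact ih.trans (hf e he _ hu _ hv)

def monochromaticEquiv [DecidableEq V] (S : Finset (Finset V)) :
    {f : V → α // ∀ e ∈ S, Monochromatic f e} ≃
      (Quot (fun a b : {v : V // v ∈ S.biUnion id} => connRel S a.1 b.1) → α) ×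
        ({v : V // v ∉ S.biUnion id} → α) where
  toFun f := ⟨Quot.lift (fun a => f.1 a.1) (fun _ _ h => h.eq_of_forall_monochromatic f.2),
    fun v => f.1 v.1⟩
  invFun p := ⟨fun v => if hv : v ∈ S.biUnion id then p.1 (Quot.mk _ ⟨v, hv⟩) else p.2 ⟨v, hv⟩,
    by
      intro e he u hu v hv
      have hu' : u ∈ S.biUnion id := mem_biUnion.2 ⟨e, he, hu⟩
      have hv' : v ∈ S.biUnion id := mem_biUnion.2 ⟨e, he, hv⟩
      simp only [dif_pos hu', dif_pos hv']
      exact congrArg p.1 (Quot.sound (Relation.ReflTransGen.single ⟨e, he, hu, hv⟩))⟩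
  left_inv f := by
    ext v
    by_cases hv : v ∈ S.biUnion id <;> simp [hv]
  right_inv p := by
    refine Prod.ext (funext fun q => ?_) (funext fun v => ?_)
    · induction q using Quot.ind with
      | mk a => simp [a.2]
    · simp [v.2]

lemma card_forall_monochromatic [Fintype V] [DecidableEq V] [Fintype α]
    (S : Finset (Finset V)) :
    Nat.card {f : V → α // ∀ e ∈ S, Monochromatic f e} =
      Fintype.card α ^ (Fintype.card V - nVerts S + nComps S) := by
  have : Finite (Quot (fun a b : {v : V // v ∈ S.biUnion id} => connRel S a.1 b.1)) :=
    Finite.of_surjective _ Quot.exists_rep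
  have hfree : Nat.card {v : V // v ∉ S.biUnion id} = Fintype.card V - nVerts S := by
    rw [Nat.card_eq_fintype_card, Fintype.card_subtype_compl, nVerts, Fintype.card_coe]
  rw [Nat.card_congr (monochromaticEquiv S), Nat.card_prod, Nat.card_fun, Nat.card_fun, hfree,
    Nat.card_eq_fintype_card, ← pow_add, add_comm, nComps]

theorem stmt0_general [Fintype V] [DecidableEq V] (E : Finset (Finset V)) (k : ℕ) :
    (chromPoly E k : ℤ) =
      ∑ S ∈ E.powerset,
        (-1) ^ S.card * (k : ℤ) ^ (Fintype.card V - nVerts S + nComps S) := by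
  set mono : Finset V → Finset (V → Fin k) := fun e => univ.filter (Monochromatic · e)
  have hproper : chromPoly E k = #(E.inf fun e => (mono e)ᶜ) := by
    rw [chromPoly, Nat.card_eq_fintype_card, Fintype.card_subtype]
    congr 1
    ext f
    simp [mono, mem_inf, properColoring_iff_forall_not_monochromatic]
  have hmono (S : Finset (Finset V)) :
      #(S.inf mono) = k ^ (Fintype.card V - nVerts S + nComps S) := by
    have hcount := card_forall_monochromatic (α := Fin k) S
    rw [Fintype.card_fin] at hcount
    rw [← hcount, Nat.card_eq_fintype_card, Fintype.card_subtype]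
    congr 1
    ext f
    simp [mono, mem_inf]
  rw [hproper, inclusion_exclusion_card_inf_compl]
  simp only [hmono, Nat.cast_pow]

/-- Whitney-type expansion of the chromatic polynomial of a hypergraph. -/
theorem stmt0 [Fintype V] [DecidableEq V] [Nonempty V] (E : Finset (Finset V))
    (hE : ∀ e ∈ E, 2 ≤ e.card) (k : ℕ) (hk : 0 < k) :
    (chromPoly E k : ℤ) =
      ∑ S ∈ E.powerset,
        (-1) ^ S.card * (k : ℤ) ^ (Fintype.card V - nVerts S + nComps S) :=
  stmt0_general E k
end
end

section
/- Let H be a connected r-uniform linear hypergraph with n vertices, m edges, and even girth z, and let t ≥ 1 be the number of cycles of length z in H. Then the polynomial D(k) := P(H, k) − k^{n − (r−1)m} (k^{r−1} − 1)^m has leading term t · k^{n − z(r−1) + 1}; in particular there exists N ∈ ℕ such that D(k) > 0 for all integers k ≥ N. -/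
/-
Common definitions: a hypergraph on a finite vertex type `V` is given by its
edge set `E : Finset (Finset V)` (each edge of size ≥ 2).
-/

noncomputable section
open Finset

attribute [local instance] Classical.propDecidable

variable {V : Type*}

/-!
Inclusion–exclusion over the edges gives `P(H, k) = ∑_{S ⊆ E} (-1)^|S| k^c(S)`, where `c(S)` counts
the components of `(V, S)`, while the binomial theorem writes the subtracted product as
`∑_{S ⊆ E} (-1)^|S| k^(n - (r - 1)|S|)`. The two terms of `S` agree when `S` is acyclic, because
every edge then merges `r` components. If `S` contains a cycle, let `C` be a shortest one, of
length `p ≥ z`. Linearity and minimality make the edges of `C` meet only at the cycle vertices, so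
`C` covers `p (r - 1)` vertices and `c(S) ≤ c(C) = n - p (r - 1) + 1 ≤ n - z (r - 1) + 1`.
Equality forces `p = z` and every edge of `S` to lie within a component of `C`; as a cycle of
girth `z ≥ 4` in a linear hypergraph has no chords, `S = C` (`z` is even, and linearity excludes
`z = 2`). So only the `t` edge sets of
`z`-cycles reach the degree `n - z (r - 1) + 1`, each with sign `(-1)^z = 1`.
-/

section Connectivity

variable {S T : Finset (Finset V)} {u v : V}

lemma connRel.symm (h : connRel S u v) : connRel S v u := by
  have : Std.Symm (connStep S) := ⟨fun _ _ ⟨e, he, hu, hv⟩ => ⟨e, he, hv, hu⟩⟩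
  exact Relation.ReflTransGen.stdSymm.symm _ _ h

lemma connRel_equivalence (S : Finset (Finset V)) : Equivalence (connRel S) :=
  ⟨fun _ => .refl, .symm, .trans⟩

lemma connRel_iff_mk_eq : connRel S u v ↔ Quot.mk (connRel S) u = Quot.mk (connRel S) v :=
  ((connRel_equivalence S).quot_mk_eq_iff u v).symm

lemma connRel_of_mem {e : Finset V} (he : e ∈ S) (hu : u ∈ e) (hv : v ∈ e) : connRel S u v :=
  .single ⟨e, he, hu, hv⟩

lemma connRel.mono (h : S ⊆ T) (h' : connRel S u v) : connRel T u v :=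
  Relation.ReflTransGen.mono (fun _ _ ⟨e, he, ha, hb⟩ => ⟨e, h he, ha, hb⟩) _ _ h'

variable [DecidableEq V]

lemma connRel.eq_of_notMem_cover (hu : u ∉ S.biUnion id) (h : connRel S u v) : u = v := by
  rcases h.cases_head with h | ⟨_, ⟨e, he, hue, _⟩, _⟩
  · exact h
  · exact absurd (mem_biUnion.mpr ⟨e, he, hue⟩) hu

lemma connRel_insert_iff {e : Finset V} :
    connRel (insert e S) u v ↔
      connRel S u v ∨ ((∃ a ∈ e, connRel S u a) ∧ ∃ b ∈ e, connRel S b v) := by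
  constructor
  · intro h
    induction h with
    | refl => exact .inl .refl
    | tail _ hstep ih =>
      obtain ⟨g, hg, hwg, hvg⟩ := hstep
      rcases mem_insert.mp hg with rfl | hgS
      · rcases ih with h | ⟨hua, _⟩
        · exact .inr ⟨⟨_, hwg, h⟩, _, hvg, .refl⟩
        · exact .inr ⟨hua, _, hvg, .refl⟩
      · rcases ih with h | ⟨hua, b, hb, hbw⟩
        · exact .inl (h.tail ⟨g, hgS, hwg, hvg⟩)
        · exact .inr ⟨hua, b, hb, hbw.tail ⟨g, hgS, hwg, hvg⟩⟩
  · have hsub : S ⊆ insert e S := subset_insert _ _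
    rintro (h | ⟨⟨a, ha, hua⟩, b, hb, hbv⟩)
    · exact h.mono hsub
    · exact ((hua.mono hsub).trans (connRel_of_mem (mem_insert_self _ _) ha hb)).trans
        (hbv.mono hsub)

end Connectivity

section Components

variable [Fintype V] {S T : Finset (Finset V)}

lemma nCompsFull_empty : nCompsFull (∅ : Finset (Finset V)) = Fintype.card V := by
  have hinj : Function.Injective (Quot.mk (connRel (∅ : Finset (Finset V)))) := by
    intro u v h
    rcases (connRel_iff_mk_eq.mpr h).cases_head with h | ⟨_, ⟨e, he, _⟩, _⟩
    · exact h
    · exact absurd he (notMem_empty e)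
  rw [nCompsFull, ← Nat.card_eq_fintype_card]
  exact (Nat.card_congr (Equiv.ofBijective _ ⟨hinj, Quot.mk_surjective⟩)).symm

lemma nCompsFull_le_of_subset (h : T ⊆ S) : nCompsFull S ≤ nCompsFull T :=
  Nat.card_le_card_of_surjective _ (Quot.map_surjective (f := id) (fun _ _ => connRel.mono h)
    Function.surjective_id)

lemma connRel.of_nCompsFull_eq {u v : V} (h : T ⊆ S) (hc : nCompsFull S = nCompsFull T)
    (huv : connRel S u v) : connRel T u v := by
  have hbij := (Quot.map_surjective (f := id) (fun _ _ => connRel.mono h)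
    Function.surjective_id).bijective_of_nat_card_le hc.ge
  exact connRel_iff_mk_eq.mpr (hbij.injective (connRel_iff_mk_eq.mp huv))

lemma nCompsFull_insert [DecidableEq V] {e : Finset V} (he : e.Nonempty) :
    nCompsFull T + 1 = nCompsFull (insert e T) + #(e.image (Quot.mk (connRel T))) := by
  let _ := Fintype.ofFinite (Quot (connRel T))
  let _ := Fintype.ofFinite (Quot (connRel (insert e T)))
  set A := e.image (Quot.mk (connRel T))
  set π : Quot (connRel T) → Quot (connRel (insert e T)) :=
    Quot.map id fun _ _ => connRel.mono (subset_insert e T)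
  have hπ : ∀ x y, π x = π y ↔ x = y ∨ (x ∈ A ∧ y ∈ A) := by
    rintro ⟨a⟩ ⟨b⟩
    change Quot.mk _ a = Quot.mk _ b ↔ _
    simp only [← connRel_iff_mk_eq, connRel_insert_iff, A, mem_image]
    exact or_congr_right (and_congr_left fun _ =>
      exists_congr fun _ => and_congr_right fun _ => ⟨.symm, .symm⟩)
  obtain ⟨a₀, ha₀⟩ := he
  have hA : Quot.mk _ a₀ ∈ A := mem_image_of_mem _ ha₀
  have himage : (insert (Quot.mk _ a₀) Aᶜ).image π = univ := by
    refine eq_univ_of_forall fun y => ?_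
    obtain ⟨x, rfl⟩ := Quot.map_surjective (f := id) (fun _ _ => connRel.mono (subset_insert e T))
      Function.surjective_id y
    by_cases hx : x ∈ A
    · exact mem_image.mpr ⟨_, mem_insert_self _ _, (hπ _ _).mpr (.inr ⟨hA, hx⟩)⟩
    · exact mem_image_of_mem π (mem_insert_of_mem (mem_compl.mpr hx))
  have hinj : Set.InjOn π ↑(insert (Quot.mk _ a₀) Aᶜ : Finset _) := by
    intro x hx y hy hxy
    simp only [coe_insert, coe_compl, Set.mem_insert_iff, Set.mem_compl_iff, mem_coe] at hx hy
    rcases (hπ x y).mp hxy with h | ⟨hxA, hyA⟩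
    · exact h
    · rw [hx.resolve_right (not_not.mpr hxA), hy.resolve_right (not_not.mpr hyA)]
  have hcard := card_image_of_injOn hinj
  rw [himage, card_univ, card_insert_of_notMem (by simpa using hA), card_compl] at hcard
  rw [nCompsFull, nCompsFull, Nat.card_eq_fintype_card, Nat.card_eq_fintype_card, hcard]
  have := card_le_univ A
  omega

lemma nCompsFull_add_card_cover [DecidableEq V] {w : V} (hw : w ∈ S.biUnion id)
    (hconn : ∀ x ∈ S.biUnion id, connRel S w x) :
    nCompsFull S + #(S.biUnion id) = Fintype.card V + 1 := by
  let φ : Option {x // x ∉ S.biUnion id} → Quot (connRel S) :=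
    fun o => o.elim (Quot.mk _ w) (fun x => Quot.mk _ x.1)
  have hφ : Function.Bijective φ := by
    refine ⟨?_, ?_⟩
    · rintro (_ | ⟨x, hx⟩) (_ | ⟨y, hy⟩) h <;> simp only [φ, Option.elim, ← connRel_iff_mk_eq] at h
      · rfl
      · exact absurd ((h.symm.eq_of_notMem_cover hy) ▸ hw) hy
      · exact absurd ((h.eq_of_notMem_cover hx).symm ▸ hw) hx
      · exact congrArg _ (Subtype.ext (h.eq_of_notMem_cover hx))
    · rintro ⟨y⟩
      by_cases hy : y ∈ S.biUnion id
      · exact ⟨none, connRel_iff_mk_eq.mp (hconn y hy)⟩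
      · exact ⟨some ⟨y, hy⟩, rfl⟩
  rw [nCompsFull, ← Nat.card_congr (Equiv.ofBijective φ hφ), Nat.card_eq_fintype_card,
    Fintype.card_option, Fintype.card_subtype_compl, Fintype.card_coe]
  have := card_le_univ (S.biUnion id)
  omega

end Components

section Walks

variable {S T : Finset (Finset V)} {u v : V}

def IsWalk (S : Finset (Finset V)) (x : ℕ → V) (f : ℕ → Finset V) (l : ℕ) : Prop :=
  ∀ k < l, f k ∈ S ∧ x k ∈ f k ∧ x (k + 1) ∈ f k

def HasWalk (S : Finset (Finset V)) (u v : V) (l : ℕ) : Prop :=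
  ∃ x f, x 0 = u ∧ x l = v ∧ IsWalk S x f l

lemma IsWalk.connRel {x : ℕ → V} {f : ℕ → Finset V} {l : ℕ} (hw : IsWalk S x f l) :
    connRel S (x 0) (x l) := by
  induction l with
  | zero => exact .refl
  | succ l ih =>
    obtain ⟨hf, h1, h2⟩ := hw l (by omega)
    exact (ih fun k hk => hw k (by omega)).tail ⟨f l, hf, h1, h2⟩

lemma connRel.exists_hasWalk (h : connRel S u v) : ∃ l, HasWalk S u v l := by
  induction h with
  | refl => exact ⟨0, fun _ => u, fun _ => ∅, rfl, rfl, fun k hk => absurd hk (Nat.not_lt_zero k)⟩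
  | @tail b c _ hbc ih =>
    obtain ⟨l, x, f, hx0, hxl, hw⟩ := ih
    obtain ⟨g, hg, hbg, hcg⟩ := hbc
    refine ⟨l + 1, fun k => if k = l + 1 then c else x k, fun k => if k = l then g else f k,
      by simp [hx0], by simp, fun k hk => ?_⟩
    rcases Nat.lt_succ_iff_lt_or_eq.mp hk with hk | rfl
    · have hk' : k ≠ l + 1 := by omega
      simpa [hk.ne, hk'] using hw k hk
    · simpa [hxl] using ⟨hg, hbg, hcg⟩

lemma IsWalk.hasWalk_cut {x : ℕ → V} {f : ℕ → Finset V} {l : ℕ} (hw : IsWalk S x f l)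
    {a b : ℕ} (hab : a ≤ b) (hbl : b ≤ l) (hlt : b < l → x a ∈ f b) (heq : b = l → x a = x l) :
    HasWalk S (x 0) (x l) (l - (b - a)) := by
  refine ⟨fun k => if k ≤ a then x k else x (k + (b - a)),
    fun k => if k < a then f k else f (k + (b - a)), by simp, ?_, fun k hk => ?_⟩
  · by_cases h : l - (b - a) ≤ a
    · simp only [h, if_true]
      rw [(by omega : l - (b - a) = a), heq (by omega)]
    · simp only [h, if_false]
      rw [Nat.sub_add_cancel (by omega)]
  · by_cases hka : k < a
    · have hka' : k + 1 ≤ a := hka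
      simpa [hka, hka.le, hka'] using hw k (by omega)
    · obtain ⟨hf, hx, hx'⟩ := hw (k + (b - a)) (by omega)
      have hka' : ¬ k + 1 ≤ a := by omega
      have hk1 : k + 1 + (b - a) = k + (b - a) + 1 := by omega
      simp only [hka, hka', hk1, if_false]
      refine ⟨hf, ?_, hx'⟩
      split_ifs with h
      · rw [(by omega : k = a), (by omega : a + (b - a) = b)]
        exact hlt (by omega)
      · exact hx

lemma isCycle_of_nat {D : Finset (Finset V)} {p : ℕ} (hp : 2 ≤ p) {x : ℕ → V}
    {f : ℕ → Finset V} (hx : Set.InjOn x (Set.Iio p)) (hf : Set.InjOn f (Set.Iio p))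
    (hxf : ∀ k < p, f k ∈ D ∧ x k ∈ f k ∧ x k ∈ f ((k + 1) % p)) : IsCycle D p := by
  have : NeZero p := ⟨by omega⟩
  have : Fact (1 < p) := ⟨hp⟩
  refine ⟨hp, fun i => x i.val, fun i => f i.val,
    fun i j h => ZMod.val_injective p (hx (ZMod.val_lt i) (ZMod.val_lt j) h),
    fun i j h => ZMod.val_injective p (hf (ZMod.val_lt i) (ZMod.val_lt j) h), fun i => ?_⟩
  simpa only [ZMod.val_add, ZMod.val_one] using hxf i.val (ZMod.val_lt i)

/-- Cutting out a repeated vertex or edge would shorten the walk. -/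
lemma HasWalk.exists_path {l : ℕ} (hw : HasWalk T u v l) :
    ∃ l₀ ≤ l, ∃ x f, x 0 = u ∧ x l₀ = v ∧ IsWalk T x f l₀ ∧
      Set.InjOn x (Set.Iio (l₀ + 1)) ∧ Set.InjOn f (Set.Iio l₀) := by
  have hex : ∃ l, HasWalk T u v l := ⟨l, hw⟩
  obtain ⟨x, f, hx0, hxl, hwalk⟩ := Nat.find_spec hex
  set l₀ := Nat.find hex
  have hcut : ∀ a b, a < b → b ≤ l₀ → (b < l₀ → x a ∈ f b) → (b = l₀ → x a = x l₀) → False :=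
    fun a b hab hb hlt heq => Nat.find_min hex (by omega : l₀ - (b - a) < l₀)
      (hx0 ▸ hxl ▸ hwalk.hasWalk_cut hab.le hb hlt heq)
  refine ⟨l₀, Nat.find_min' hex hw, x, f, hx0, hxl, hwalk, ?_, ?_⟩
  · intro a ha b hb hab
    have key : ∀ a b, a < b → b ≤ l₀ → x a = x b → False := fun a b hab hb h =>
      hcut a b hab hb (fun hb' => h ▸ (hwalk b hb').2.1) (fun hb' => hb' ▸ h)
    rcases lt_trichotomy a b with h | h | h
    · exact (key a b h (Nat.lt_succ_iff.mp hb) hab).elim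
    · exact h
    · exact (key b a h (Nat.lt_succ_iff.mp ha) hab.symm).elim
  · intro a ha b hb hab
    have key : ∀ a b, a < b → b < l₀ → f a = f b → False := fun a b hab hb h =>
      hcut a b hab hb.le (fun _ => h ▸ (hwalk a (by omega)).2.1) (by omega)
    rcases lt_trichotomy a b with h | h | h
    · exact (key a b h hb hab).elim
    · exact h
    · exact (key b a h ha hab.symm).elim

lemma exists_isCycle_insert_of_hasWalk [DecidableEq V] {e : Finset V} (he : e ∉ T)
    (huv : u ≠ v) (hu : u ∈ e) (hv : v ∈ e) {l : ℕ} (hw : HasWalk T u v l) :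
    ∃ q, 2 ≤ q ∧ q ≤ l + 1 ∧ IsCycle (insert e T) q := by
  obtain ⟨l₀, hl, x, f, hx0, hxl, hwalk, hxinj, hfinj⟩ := hw.exists_path
  have hl₀ : 0 < l₀ := Nat.pos_of_ne_zero fun h => huv (by rw [← hx0, ← hxl, h])
  have hfT : ∀ k < l₀, f k ∈ T := fun k hk => (hwalk k hk).1
  refine ⟨l₀ + 1, by omega, by omega,
    isCycle_of_nat (f := fun k => if k = 0 then e else f (k - 1)) (by omega) hxinj ?_ ?_⟩
  · intro a ha b hb hab
    simp only [Set.mem_Iio] at ha hb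
    cases a <;> cases b <;>
      simp only [Nat.add_sub_cancel, if_true, Nat.add_one_ne_zero, if_false] at hab
    · rfl
    · exact (he (hab ▸ hfT _ (by omega))).elim
    · exact (he (hab.symm ▸ hfT _ (by omega))).elim
    · exact congrArg (· + 1) (hfinj (by simp only [Set.mem_Iio]; omega)
        (by simp only [Set.mem_Iio]; omega) hab)
  · intro k hk
    cases k with
    | zero =>
      have h1 : 1 % (l₀ + 1) = 1 := Nat.mod_eq_of_lt (by omega)
      simpa [h1, hx0, hu] using (hwalk 0 hl₀).2.1
    | succ k =>
      simp only [Nat.add_one_ne_zero, if_false, Nat.add_sub_cancel]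
      refine ⟨mem_insert_of_mem (hfT _ (by omega)), (hwalk k (by omega)).2.2, ?_⟩
      rcases Nat.lt_or_ge (k + 1) l₀ with hkl | hkl
      · have h1 : (k + 1 + 1) % (l₀ + 1) = k + 1 + 1 := Nat.mod_eq_of_lt (by omega)
        simpa [h1] using (hwalk (k + 1) hkl).2.1
      · have hk : k + 1 = l₀ := by omega
        simpa [hk, hxl] using hv

lemma exists_isCycle_insert_of_connRel [DecidableEq V] {e : Finset V} (he : e ∉ T)
    (huv : u ≠ v) (hu : u ∈ e) (hv : v ∈ e) (h : connRel T u v) :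
    ∃ q, IsCycle (insert e T) q :=
  let ⟨_, hw⟩ := h.exists_hasWalk
  let ⟨q, _, _, hq⟩ := exists_isCycle_insert_of_hasWalk he huv hu hv hw
  ⟨q, hq⟩

end Walks

lemma exists_mem_of_forall_connRel [DecidableEq V] {ι : Type*} [Fintype ι] {es : ι → Finset V}
    {e : Finset V} (he : 1 < #e) (hconn : ∀ u ∈ e, ∀ v ∈ e, connRel (univ.image es) u v)
    {w : V} (hw : w ∈ e) : ∃ i, w ∈ es i := by
  obtain ⟨w', hw', hne⟩ := exists_mem_ne he w
  by_cases hcov : w ∈ (univ.image es).biUnion id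
  · obtain ⟨_, hg, hwg⟩ := mem_biUnion.mp hcov
    obtain ⟨i, -, rfl⟩ := mem_image.mp hg
    exact ⟨i, hwg⟩
  · exact (hne ((hconn w hw w' hw').eq_of_notMem_cover hcov).symm).elim

lemma IsCycle.mono {D D' : Finset (Finset V)} (h : D ⊆ D') {p : ℕ} (hD : IsCycle D p) :
    IsCycle D' p :=
  let ⟨hp, vs, es, hvs, hes, hc⟩ := hD
  ⟨hp, vs, es, hvs, hes, fun i => ⟨h (hc i).1, (hc i).2⟩⟩

lemma IsCycle.le_card {D : Finset (Finset V)} {p : ℕ} (hD : IsCycle D p) : p ≤ #D := by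
  obtain ⟨hp, vs, es, -, hes, hc⟩ := hD
  have : NeZero p := ⟨by omega⟩
  simpa using card_le_card_of_injOn (s := univ) es (fun i _ => (hc i).1) hes.injOn

section Cycles

variable {p : ℕ} [NeZero p] {vs : ZMod p → V} {es : ZMod p → Finset V}

lemma hasWalk_of_cycle (hc : ∀ i, vs i ∈ es i ∧ vs i ∈ es (i + 1)) {T : Finset (Finset V)}
    {u v : V} {i j : ZMod p} (hT : ∀ m ≤ (j - i).val, es (i + m) ∈ T) (hu : u ∈ es i)
    (hv : v ∈ es j) : HasWalk T u v ((j - i).val + 1) := by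
  set d := (j - i).val
  have hj : i + (d : ZMod p) = j := by rw [ZMod.natCast_zmod_val]; ring
  refine ⟨fun k => if k = 0 then u else if k = d + 1 then v else vs (i + (k - 1 : ℕ)),
    fun k => es (i + k), by simp, by simp, fun k hk => ⟨hT k (by omega), ?_, ?_⟩⟩
  · cases k with
    | zero => simpa using hu
    | succ k =>
      have hk : k + 1 ≠ d + 1 := by omega
      simp only [Nat.add_one_ne_zero, hk, if_false, Nat.add_sub_cancel, Nat.cast_succ, ← add_assoc]
      exact (hc _).2
  · by_cases hk : k = d
    · simp [hk, hj, hv]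
    · have hk' : k + 1 ≠ d + 1 := by omega
      simp only [Nat.add_one_ne_zero, hk', if_false, Nat.add_sub_cancel]
      exact (hc _).1

lemma connRel_of_mem_cover_cycle (hc : ∀ i, vs i ∈ es i ∧ vs i ∈ es (i + 1))
    [DecidableEq V] {x : V} (hx : x ∈ (univ.image es).biUnion id) :
    connRel (univ.image es) (vs 0) x := by
  obtain ⟨_, hg, hxg⟩ := mem_biUnion.mp hx
  obtain ⟨i, -, rfl⟩ := mem_image.mp hg
  obtain ⟨_, _, hx0, hxl, hw⟩ := hasWalk_of_cycle hc (i := 0) (j := i)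
    (fun _ _ => mem_image_of_mem _ (mem_univ _)) (hc 0).1 hxg
  exact hx0 ▸ hxl ▸ hw.connRel

lemma biUnion_image_eq_biUnion_erase [DecidableEq V] (hp : 2 ≤ p) (hvs : Function.Injective vs)
    (hc : ∀ i, vs i ∈ es i ∧ vs i ∈ es (i + 1)) :
    (univ.image es).biUnion id = univ.biUnion fun i => (es i).erase (vs i) := by
  have : Fact (1 < p) := ⟨hp⟩
  ext x
  simp only [mem_biUnion, mem_image, mem_univ, true_and, id, mem_erase]
  constructor
  · rintro ⟨_, ⟨i, rfl⟩, hx⟩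
    by_cases hxi : x = vs i
    · subst hxi
      exact ⟨i + 1, fun h => one_ne_zero (left_eq_add.mp (hvs h)), (hc i).2⟩
    · exact ⟨i, hxi, hx⟩
  · rintro ⟨i, -, hx⟩
    exact ⟨_, ⟨i, rfl⟩, hx⟩

lemma nCompsFull_image_add_card_cover [Fintype V] [DecidableEq V]
    (hc : ∀ i, vs i ∈ es i ∧ vs i ∈ es (i + 1)) :
    nCompsFull (univ.image es) + #((univ.image es).biUnion id) = Fintype.card V + 1 :=
  nCompsFull_add_card_cover (mem_biUnion.mpr ⟨es 0, mem_image_of_mem _ (mem_univ _), (hc 0).1⟩)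
    fun _ => connRel_of_mem_cover_cycle hc

end Cycles

lemma ZMod.val_sub_add_val_sub {p : ℕ} [NeZero p] {i j : ZMod p} (h : i ≠ j) :
    (j - i).val + (i - j).val = p := by
  have : NeZero (j - i) := ⟨sub_ne_zero.mpr h.symm⟩
  rw [← neg_sub j i, ZMod.val_neg_of_ne_zero]
  have := ZMod.val_lt (j - i)
  omega

lemma Uniform.mono {E D : Finset (Finset V)} {r : ℕ} (hunif : Uniform E r) (h : D ⊆ E) :
    Uniform D r :=
  fun e he => hunif e (h he)

section Girth

variable [DecidableEq V] {E D : Finset (Finset V)} {r p : ℕ}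

lemma Linear.mono (hlin : Linear E) (h : D ⊆ E) : Linear D :=
  fun e he e' he' => hlin e (h he) e' (h he')

lemma Linear.three_le_of_isCycle (hlin : Linear D) (h : IsCycle D p) : 3 ≤ p := by
  obtain ⟨hp, vs, es, hvs, hes, hc⟩ := h
  by_contra hp3
  obtain rfl : p = 2 := by omega
  have h01 : (0 : ZMod 2) ≠ 1 := by decide
  have hmem : ∀ i : ZMod 2, vs i ∈ es 0 ∩ es 1 := by
    intro i
    fin_cases i
    · exact mem_inter.mpr ⟨(hc 0).2.1, (hc 0).2.2⟩
    · exact mem_inter.mpr ⟨(hc 1).2.2, (hc 1).2.1⟩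
  exact h01 (hvs (card_le_one.mp (hlin _ (hc 0).1 _ (hc 1).1 (hes.ne h01)) _ (hmem 0) _ (hmem 1)))

variable [NeZero p] {vs : ZMod p → V} {es : ZMod p → Finset V}

/-- A common vertex other than a cycle vertex would close a shorter cycle or, on consecutive
edges, violate linearity. -/
lemma disjoint_erase_of_shortest (hlin : Linear D) (hes : Function.Injective es)
    (hc : ∀ i, es i ∈ D ∧ vs i ∈ es i ∧ vs i ∈ es (i + 1))
    (hshort : ∀ q, 2 ≤ q → q < p → ¬ IsCycle D q) {i j : ZMod p} (hij : i ≠ j) :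
    Disjoint ((es i).erase (vs i)) ((es j).erase (vs j)) := by
  rw [disjoint_left]
  intro w hwi hwj
  rw [mem_erase] at hwi hwj
  by_cases hji : j + 1 = i
  · have hvj : vs j ∈ es j ∩ es i := mem_inter.mpr ⟨(hc j).2.1, hji ▸ (hc j).2.2⟩
    exact hwj.1 (card_le_one.mp (hlin _ (hc j).1 _ (hc i).1 (hes.ne hij.symm)) _
      (mem_inter.mpr ⟨hwj.2, hwi.2⟩) _ hvj)
  · set d := (j - (i + 1)).val
    have hdj : i + 1 + (d : ZMod p) = j := by rw [ZMod.natCast_zmod_val]; ring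
    have hd : d + 2 < p := by
      have := ZMod.val_lt (j - (i + 1))
      by_contra h
      rcases (by omega : d + 1 = p ∨ d + 2 = p) with h | h
      · have h0 : ((d + 1 : ℕ) : ZMod p) = 0 := by rw [h, ZMod.natCast_self]
        push_cast at h0
        exact hij (by linear_combination hdj - h0)
      · have h0 : ((d + 2 : ℕ) : ZMod p) = 0 := by rw [h, ZMod.natCast_self]
        push_cast at h0
        exact hji (by linear_combination -hdj + h0)
    have hT : ∀ m ≤ d, es (i + 1 + m) ∈ D.erase (es i) := by
      intro m hm
      refine mem_erase.mpr ⟨fun h => ?_, (hc _).1⟩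
      have h0 : ((m + 1 : ℕ) : ZMod p) = 0 := by
        push_cast
        linear_combination hes h
      have := ZMod.val_cast_of_lt (by omega : m + 1 < p)
      rw [h0, ZMod.val_zero] at this
      omega
    obtain ⟨q, hq2, hqd, hq⟩ := exists_isCycle_insert_of_hasWalk (notMem_erase (es i) D)
      (Ne.symm hwi.1) (hc i).2.1 hwi.2 (hasWalk_of_cycle (fun k => (hc k).2) hT (hc i).2.2 hwj.2)
    rw [insert_erase (hc i).1] at hq
    exact hshort q hq2 (by omega) hq

lemma nCompsFull_image_add_of_shortest [Fintype V] (hlin : Linear D) (hunif : Uniform D r)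
    (hp : 2 ≤ p) (hvs : Function.Injective vs) (hes : Function.Injective es)
    (hc : ∀ i, es i ∈ D ∧ vs i ∈ es i ∧ vs i ∈ es (i + 1))
    (hshort : ∀ q, 2 ≤ q → q < p → ¬ IsCycle D q) :
    nCompsFull (univ.image es) + p * (r - 1) = Fintype.card V + 1 := by
  have hcard : #((univ.image es).biUnion id) = p * (r - 1) := by
    rw [biUnion_image_eq_biUnion_erase hp hvs (fun i => (hc i).2),
      card_biUnion fun i _ j _ hij => disjoint_erase_of_shortest hlin hes hc hshort hij]
    simp [card_erase_of_mem (hc _).2.1, hunif _ (hc _).1]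
  rw [← hcard]
  exact nCompsFull_image_add_card_cover fun i => (hc i).2

end Girth

section Chords

variable [DecidableEq V] {E : Finset (Finset V)} {r z : ℕ}

lemma girth_le_val_sub_add_two [NeZero z] (hgirth : ∀ q, 2 ≤ q → q < z → ¬ IsCycle E q)
    {vs : ZMod z → V} {es : ZMod z → Finset V}
    (hc : ∀ i, es i ∈ E ∧ vs i ∈ es i ∧ vs i ∈ es (i + 1)) {e : Finset V} (he : e ∈ E)
    (heC : e ∉ univ.image es) {u v : V} (huv : u ≠ v) (hu : u ∈ e) (hv : v ∈ e)
    {i j : ZMod z} (hui : u ∈ es i) (hvj : v ∈ es j) : z ≤ (j - i).val + 2 := by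
  obtain ⟨q, hq2, hq, hcyc⟩ := exists_isCycle_insert_of_hasWalk heC huv hu hv
    (hasWalk_of_cycle (fun k => (hc k).2) (fun _ _ => mem_image_of_mem _ (mem_univ _)) hui hvj)
  have hsub : insert e (univ.image es) ⊆ E :=
    insert_subset he (image_subset_iff.mpr fun k _ => (hc k).1)
  by_contra h
  exact hgirth q hq2 (by omega) (hcyc.mono hsub)

lemma eq_four_of_chord (hz : 4 ≤ z) [NeZero z] (hlin : Linear E)
    (hgirth : ∀ q, 2 ≤ q → q < z → ¬ IsCycle E q) {vs : ZMod z → V} {es : ZMod z → Finset V}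
    (hc : ∀ i, es i ∈ E ∧ vs i ∈ es i ∧ vs i ∈ es (i + 1)) {e : Finset V} (he : e ∈ E)
    (heC : e ∉ univ.image es) {u v : V} (huv : u ≠ v) (hu : u ∈ e) (hv : v ∈ e)
    {i j : ZMod z} (hui : u ∈ es i) (hvj : v ∈ es j) : z = 4 ∧ (j - i).val = 2 := by
  have hij : i ≠ j := by
    rintro rfl
    exact huv (card_le_one.mp
      (hlin _ he _ (hc i).1 fun h => heC (h ▸ mem_image_of_mem _ (mem_univ i)))
      _ (mem_inter.mpr ⟨hu, hui⟩) _ (mem_inter.mpr ⟨hv, hvj⟩))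
  have := ZMod.val_sub_add_val_sub hij
  have := girth_le_val_sub_add_two hgirth hc he heC huv hu hv hui hvj
  have := girth_le_val_sub_add_two hgirth hc he heC huv.symm hv hu hvj hui
  omega

/-- A girth cycle has no chord: by `eq_four_of_chord` the girth is four and any two vertices of a
chord lie on opposite edges of the cycle. A third vertex of the chord (`r ≥ 3`), or a cycle
vertex lying on two consecutive edges (`r = 2`), cannot be opposite to both. -/
lemma mem_cycle_of_forall_connRel (hr : 2 ≤ r) (hz : 4 ≤ z) [NeZero z] (hunif : Uniform E r)
    (hlin : Linear E) (hgirth : ∀ q, 2 ≤ q → q < z → ¬ IsCycle E q)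
    {vs : ZMod z → V} {es : ZMod z → Finset V} (hvs : Function.Injective vs)
    (hc : ∀ i, es i ∈ E ∧ vs i ∈ es i ∧ vs i ∈ es (i + 1)) {e : Finset V} (he : e ∈ E)
    (hconn : ∀ u ∈ e, ∀ v ∈ e, connRel (univ.image es) u v) : e ∈ univ.image es := by
  by_contra heC
  have he2 : 1 < #e := by rw [hunif e he]; omega
  have hpos : ∀ w ∈ e, ∃ i, w ∈ es i := fun w hw => exists_mem_of_forall_connRel he2 hconn hw
  obtain ⟨u, hu, v, hv, huv⟩ := one_lt_card.mp he2
  obtain ⟨i, hui⟩ := hpos u hu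
  obtain ⟨j, hvj⟩ := hpos v hv
  obtain ⟨rfl, -⟩ := eq_four_of_chord hz hlin hgirth hc he heC huv hu hv hui hvj
  have hopp : ∀ u ∈ e, ∀ v ∈ e, u ≠ v → ∀ i j, u ∈ es i → v ∈ es j → j = i + 2 := by
    intro u hu v hv huv i j hui hvj
    have key : ∀ a b : ZMod 4, (b - a).val = 2 → b = a + 2 := by decide
    exact key i j (eq_four_of_chord hz hlin hgirth hc he heC huv hu hv hui hvj).2
  rcases (by omega : r = 2 ∨ 3 ≤ r) with rfl | hr3
  · have hpair : es i = {vs (i - 1), vs i} := by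
      refine (eq_of_subset_of_card_le (insert_subset ?_ (singleton_subset_iff.mpr (hc i).2.1))
        ?_).symm
      · simpa using (hc (i - 1)).2.2
      · have hne : ∀ a : ZMod 4, a - 1 ≠ a := by decide
        rw [hunif _ (hc i).1, card_pair fun h => hne i (hvs h)]
    obtain ⟨a, rfl⟩ : ∃ a, u = vs a := by
      rw [hpair, mem_insert, mem_singleton] at hui
      rcases hui with h | h <;> exact ⟨_, h⟩
    have key : ∀ a : ZMod 4, a + 2 ≠ a + 1 + 2 := by decide
    exact key a ((hopp _ hu v hv huv a j (hc a).2.1 hvj).symm.trans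
      (hopp _ hu v hv huv (a + 1) j (hc a).2.2 hvj))
  · obtain ⟨w, hw, hwuv⟩ : ∃ w ∈ e, w ∉ ({u, v} : Finset V) := by
      by_contra! h
      have := card_le_card (show e ⊆ {u, v} from h)
      rw [card_pair huv, hunif e he] at this
      omega
    rw [mem_insert, mem_singleton, not_or] at hwuv
    obtain ⟨k, hwk⟩ := hpos w hw
    have key : ∀ a : ZMod 4, a + 2 ≠ a + 2 + 2 := by decide
    have hj := hopp u hu v hv huv i j hui hvj
    have hki := hopp u hu w hw (Ne.symm hwuv.1) i k hui hwk
    have hkj := hopp v hv w hw (Ne.symm hwuv.2) j k hvj hwk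
    rw [hki, hj] at hkj
    exact key i hkj

end Chords

section Classification

variable [Fintype V] [DecidableEq V] {E S : Finset (Finset V)} {r z : ℕ}

/-- Each edge added to an acyclic edge set joins `r` different components into one. -/
lemma nCompsFull_add_of_acyclic (hr : 0 < r) (hunif : Uniform S r) (hS : ∀ p, ¬ IsCycle S p) :
    nCompsFull S + (r - 1) * #S = Fintype.card V := by
  induction S using Finset.induction_on with
  | empty => simp [nCompsFull_empty]
  | @insert e T heT ih =>
    have hT : ∀ p, ¬ IsCycle T p := fun p h => hS p (h.mono (subset_insert e T))
    have hinj : Set.InjOn (Quot.mk (connRel T)) e := fun a ha b hb hab => by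
      by_contra hne
      obtain ⟨q, hq⟩ :=
        exists_isCycle_insert_of_connRel heT hne ha hb (connRel_iff_mk_eq.mpr hab)
      exact hS q hq
    have he : #e = r := hunif e (mem_insert_self e T)
    have hins := nCompsFull_insert (T := T) (card_pos.mp (by omega) : e.Nonempty)
    rw [card_image_of_injOn hinj, he] at hins
    have := ih (hunif.mono (subset_insert e T)) hT
    rw [card_insert_of_notMem heT, Nat.mul_succ]
    omega

lemma nCompsFull_add_le_of_isCycle (hr : 2 ≤ r) (hz : 4 ≤ z) (hunif : Uniform E r)
    (hlin : Linear E) (hgirth : ∀ q, 2 ≤ q → q < z → ¬ IsCycle E q) (hS : S ⊆ E)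
    (hcyc : ∃ p, IsCycle S p) :
    z ≤ #S ∧ nCompsFull S + z * (r - 1) ≤ Fintype.card V + 1 ∧
      (nCompsFull S + z * (r - 1) = Fintype.card V + 1 → #S = z ∧ IsCycle S z) := by
  obtain ⟨p, hp, hshort⟩ : ∃ p, IsCycle S p ∧ ∀ q, 2 ≤ q → q < p → ¬ IsCycle S q :=
    ⟨_, Nat.find_spec hcyc, fun _ _ => Nat.find_min hcyc⟩
  have hzp : z ≤ p := not_lt.mp fun h => hgirth p hp.1 h (hp.mono hS)
  obtain ⟨hp2, vs, es, hvs, hes, hc⟩ := id hp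
  have : NeZero p := ⟨by omega⟩
  have hCS : univ.image es ⊆ S := image_subset_iff.mpr fun i _ => (hc i).1
  have hC := nCompsFull_image_add_of_shortest (hlin.mono hS) (hunif.mono hS) hp2 hvs hes hc hshort
  have hle := nCompsFull_le_of_subset hCS
  have hmul : z * (r - 1) ≤ p * (r - 1) := Nat.mul_le_mul_right _ hzp
  refine ⟨hzp.trans hp.le_card, by omega, fun heq => ?_⟩
  obtain rfl : p = z := by
    by_contra hne
    have := Nat.mul_lt_mul_of_pos_right (lt_of_le_of_ne hzp (Ne.symm hne)) (by omega : 0 < r - 1)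
    omega
  have hSC : S = univ.image es := by
    refine Subset.antisymm (fun e he => ?_) hCS
    exact mem_cycle_of_forall_connRel hr hz hunif hlin hgirth hvs
      (fun i => ⟨hS (hc i).1, (hc i).2⟩) (hS he)
      fun u hu v hv => (connRel_of_mem he hu hv).of_nCompsFull_eq hCS (by omega)
  exact ⟨by rw [hSC, card_image_of_injective _ hes, card_univ, ZMod.card], hp⟩

lemma nCompsFull_add_eq_of_isCycle (hunif : Uniform E r) (hlin : Linear E)
    (hgirth : ∀ q, 2 ≤ q → q < z → ¬ IsCycle E q) (hS : S ⊆ E) (hcard : #S = z)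
    (hcyc : IsCycle S z) : nCompsFull S + z * (r - 1) = Fintype.card V + 1 := by
  obtain ⟨hz, vs, es, hvs, hes, hc⟩ := hcyc
  have : NeZero z := ⟨by omega⟩
  have hSC : univ.image es = S := eq_of_subset_of_card_le
    (image_subset_iff.mpr fun i _ => (hc i).1)
    (by rw [hcard, card_image_of_injective _ hes, card_univ, ZMod.card])
  rw [← hSC]
  exact nCompsFull_image_add_of_shortest (hlin.mono hS) (hunif.mono hS) hz hvs hes hc
    fun q hq2 hq h => hgirth q hq2 hq (h.mono hS)

end Classification

section Counting

variable [Fintype V]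

lemma card_monochromatic (S : Finset (Finset V)) (k : ℕ) :
    #{f : V → Fin k | ∀ e ∈ S, ∀ u ∈ e, ∀ v ∈ e, f u = f v} = k ^ nCompsFull S := by
  let _ := Fintype.ofFinite (Quot (connRel S))
  let φ : {f : V → Fin k // ∀ e ∈ S, ∀ u ∈ e, ∀ v ∈ e, f u = f v} ≃ (Quot (connRel S) → Fin k) :=
    { toFun := fun f => Quot.lift f.1 fun _ _ h => by
        induction h with
        | refl => rfl
        | tail _ hstep ih =>
          obtain ⟨e, he, hb, hc⟩ := hstep
          exact ih.trans (f.2 e he _ hb _ hc)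
      invFun := fun g => ⟨fun v => g (Quot.mk _ v), fun e he u hu v hv =>
        congrArg g (Quot.sound (connRel_of_mem he hu hv))⟩
      left_inv := fun _ => rfl
      right_inv := fun g => funext fun q => Quot.inductionOn q fun _ => rfl }
  rw [← Fintype.card_subtype, Fintype.card_congr φ, Fintype.card_fun, Fintype.card_fin, nCompsFull,
    Nat.card_eq_fintype_card]

lemma chromPoly_eq_sum (E : Finset (Finset V)) (k : ℕ) :
    (chromPoly E k : ℤ) = ∑ S ∈ E.powerset, (-1) ^ #S * (k : ℤ) ^ nCompsFull S := by
  let mono : Finset V → Finset (V → Fin k) := fun e => {f | ∀ u ∈ e, ∀ v ∈ e, f u = f v}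
  have hproper : chromPoly E k = #(E.inf fun e => (mono e)ᶜ) := by
    rw [chromPoly, Nat.card_eq_fintype_card, Fintype.card_subtype]
    congr 1
    ext f
    simp only [mem_filter, mem_univ, true_and, mem_inf, mem_compl, mono]
    simp [ProperColoring]
  have hmono : ∀ S : Finset (Finset V), #(S.inf mono) = k ^ nCompsFull S := by
    intro S
    rw [← card_monochromatic]
    congr 1
    ext f
    simp [mono, mem_inf]
  rw [hproper, inclusion_exclusion_card_inf_compl]
  simp only [hmono, Nat.cast_pow]

lemma chromPoly_sub_eq_sum (E : Finset (Finset V)) (r : ℕ) {k : ℕ} (hk : k ≠ 0) :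
    (chromPoly E k : ℚ) -
        (k : ℚ) ^ ((Fintype.card V : ℤ) - (r - 1 : ℕ) * #E) * ((k : ℚ) ^ (r - 1) - 1) ^ #E =
      ∑ S ∈ E.powerset, (-1) ^ #S *
        ((k : ℚ) ^ nCompsFull S - (k : ℚ) ^ ((Fintype.card V : ℤ) - (r - 1 : ℕ) * #S)) := by
  have hk' : (k : ℚ) ≠ 0 := Nat.cast_ne_zero.mpr hk
  have hP : (chromPoly E k : ℚ) = ∑ S ∈ E.powerset, (-1) ^ #S * (k : ℚ) ^ nCompsFull S := by
    exact_mod_cast chromPoly_eq_sum E k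
  have hbinom : ((k : ℚ) ^ (r - 1) - 1) ^ #E =
      ∑ S ∈ E.powerset, (-1) ^ #S * ((k : ℚ) ^ (r - 1)) ^ (#E - #S) := by
    rw [sub_eq_neg_add, ← prod_const, prod_add]
    refine sum_congr rfl fun S hS => ?_
    rw [prod_const, prod_const, card_sdiff_of_subset (mem_powerset.mp hS)]
  have hpow : ∀ S ∈ E.powerset, (k : ℚ) ^ ((Fintype.card V : ℤ) - (r - 1 : ℕ) * #E) *
      ((k : ℚ) ^ (r - 1)) ^ (#E - #S) = (k : ℚ) ^ ((Fintype.card V : ℤ) - (r - 1 : ℕ) * #S) := by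
    intro S hS
    rw [← pow_mul, ← zpow_natCast, ← zpow_add₀ hk']
    congr 1
    push_cast [Nat.cast_sub (card_le_card (mem_powerset.mp hS))]
    ring
  rw [hP, hbinom, mul_sum, ← sum_sub_distrib]
  refine sum_congr rfl fun S hS => ?_
  rw [mul_left_comm, hpow S hS, mul_sub]

end Counting

open Filter Topology

lemma tendsto_pow_sub_zpow_div_pow {a m : ℕ} {b : ℤ} (ha : a ≤ m) (hb : b < m) :
    Tendsto (fun k : ℕ => ((k : ℚ) ^ a - (k : ℚ) ^ b) / (k : ℚ) ^ m) atTop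
      (𝓝 (if a = m then 1 else 0)) := by
  have hlim : ∀ c : ℤ, c < 0 → Tendsto (fun k : ℕ => (k : ℚ) ^ c) atTop (𝓝 0) :=
    fun c hc => (tendsto_zpow_atTop_zero hc).comp tendsto_natCast_atTop_atTop
  have hsub : Tendsto (fun k : ℕ => (k : ℚ) ^ ((a : ℤ) - m) - (k : ℚ) ^ (b - m)) atTop
      (𝓝 ((if a = m then 1 else 0) - 0)) := by
    refine Tendsto.sub ?_ (hlim _ (by omega))
    split_ifs with h
    · simp [h]
    · exact hlim _ (by omega)
  rw [sub_zero] at hsub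
  refine hsub.congr' ?_
  filter_upwards [eventually_ne_atTop 0] with k hk
  have hk' : (k : ℚ) ≠ 0 := Nat.cast_ne_zero.mpr hk
  rw [zpow_sub₀ hk', zpow_sub₀ hk', zpow_natCast, zpow_natCast, sub_div]

lemma exists_forall_pos_of_tendsto_div_pow {f : ℕ → ℚ} {m : ℕ} {t : ℚ} (ht : 0 < t)
    (h : Tendsto (fun k : ℕ => f k / (k : ℚ) ^ m) atTop (𝓝 t)) : ∃ N, ∀ k ≥ N, 0 < f k := by
  obtain ⟨N, hN⟩ := eventually_atTop.mp
    ((h.eventually (eventually_gt_nhds ht)).and (eventually_gt_atTop 0))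
  refine ⟨N, fun k hk => ?_⟩
  obtain ⟨hpos, hk0⟩ := hN k hk
  exact (div_pos_iff_of_pos_right (by positivity)).mp hpos

lemma tendsto_alternating_term [Fintype V] [DecidableEq V] {E S : Finset (Finset V)} {r z : ℕ}
    (hr : 2 ≤ r) (hz : 4 ≤ z) (hzeven : Even z) (hunif : Uniform E r) (hlin : Linear E)
    (hgirth : ∀ q, 2 ≤ q → q < z → ¬ IsCycle E q) (hzn : z * (r - 1) ≤ Fintype.card V)
    (hS : S ⊆ E) :
    Tendsto (fun k : ℕ => (-1 : ℚ) ^ #S *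
        ((k : ℚ) ^ nCompsFull S - (k : ℚ) ^ ((Fintype.card V : ℤ) - (r - 1 : ℕ) * #S)) /
          (k : ℚ) ^ (Fintype.card V - z * (r - 1) + 1))
      atTop (𝓝 (if #S = z ∧ IsCycle S z then 1 else 0)) := by
  simp only [mul_div_assoc]
  by_cases hcyc : ∃ p, IsCycle S p
  · obtain ⟨hzS, hle, heq⟩ := nCompsFull_add_le_of_isCycle hr hz hunif hlin hgirth hS hcyc
    have hiff : nCompsFull S = Fintype.card V - z * (r - 1) + 1 ↔ #S = z ∧ IsCycle S z :=
      ⟨fun h => heq (by omega), fun h => by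
        have := nCompsFull_add_eq_of_isCycle hunif hlin hgirth hS h.1 h.2
        omega⟩
    have hb : (Fintype.card V : ℤ) - (r - 1 : ℕ) * #S <
        (Fintype.card V - z * (r - 1) + 1 : ℕ) := by
      have : z * (r - 1) ≤ (r - 1) * #S := by
        rw [mul_comm]
        exact Nat.mul_le_mul_left _ hzS
      push_cast [Nat.cast_sub hzn]
      have := (Nat.cast_le (α := ℤ)).mpr this
      push_cast at this
      linarith
    have hlim :=
      (tendsto_pow_sub_zpow_div_pow (a := nCompsFull S) (by omega) hb).const_mul ((-1 : ℚ) ^ #S)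
    simp only [hiff] at hlim
    split_ifs at hlim ⊢ with h
    · have hev : Even #S := h.1 ▸ hzeven
      simpa only [hev.neg_one_pow, mul_one] using hlim
    · rwa [mul_zero] at hlim
  · have hc : (nCompsFull S : ℤ) = (Fintype.card V : ℤ) - (r - 1 : ℕ) * #S := by
      have := congrArg (Nat.cast : ℕ → ℤ)
        (nCompsFull_add_of_acyclic (by omega) (hunif.mono hS) (not_exists.mp hcyc))
      push_cast at this
      linarith
    have hnot : ¬ (#S = z ∧ IsCycle S z) := fun h => hcyc ⟨z, h.2⟩
    simp only [hnot, if_false, ← hc, zpow_natCast, sub_self, zero_div, mul_zero]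
    exact tendsto_const_nhds

lemma tendsto_chromPoly_sub_div [Fintype V] [DecidableEq V] {E : Finset (Finset V)} {r z : ℕ}
    (hr : 2 ≤ r) (hz : 4 ≤ z) (hzeven : Even z) (hunif : Uniform E r) (hlin : Linear E)
    (hgirth : ∀ q, 2 ≤ q → q < z → ¬ IsCycle E q) (hzn : z * (r - 1) ≤ Fintype.card V) :
    Tendsto
      (fun k : ℕ =>
        ((chromPoly E k : ℚ) -
            (k : ℚ) ^ ((Fintype.card V : ℤ) - (r - 1 : ℕ) * #E) * ((k : ℚ) ^ (r - 1) - 1) ^ #E) /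
          (k : ℚ) ^ (Fintype.card V - z * (r - 1) + 1))
      atTop (𝓝 (#{S ∈ E.powerset | #S = z ∧ IsCycle S z} : ℚ)) := by
  rw [← sum_boole]
  refine (tendsto_finsetSum _ fun S hS => tendsto_alternating_term hr hz hzeven hunif hlin hgirth
    hzn (mem_powerset.mp hS)).congr' ?_
  filter_upwards [eventually_ne_atTop 0] with k hk
  rw [chromPoly_sub_eq_sum E r hk, sum_div]

open Filter in
theorem stmt6_general [Fintype V] [DecidableEq V] (E : Finset (Finset V)) (r : ℕ) (hr : 2 ≤ r)
    (hunif : Uniform E r) (hlin : Linear E)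
    (z : ℕ) (hz : Even z) (hmin : ∀ p, 2 ≤ p → p < z → ¬ IsCycle E p)
    (t : ℕ) (ht : t = (E.powerset.filter fun S => S.card = z ∧ IsCycle S z).card)
    (ht1 : 1 ≤ t) :
    Tendsto
      (fun k : ℕ =>
        ((chromPoly E k : ℚ) -
            (k : ℚ) ^ ((Fintype.card V : ℤ) - (r - 1 : ℕ) * E.card) *
              ((k : ℚ) ^ (r - 1) - 1) ^ E.card) /
          (k : ℚ) ^ (Fintype.card V - z * (r - 1) + 1))
      atTop (nhds (t : ℚ)) ∧
    ∃ N : ℕ, ∀ k ≥ N,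
      0 < (chromPoly E k : ℚ) -
            (k : ℚ) ^ ((Fintype.card V : ℤ) - (r - 1 : ℕ) * E.card) *
              ((k : ℚ) ^ (r - 1) - 1) ^ E.card := by
  obtain ⟨C, hC⟩ := card_pos.mp (ht ▸ ht1)
  obtain ⟨hCE, hCcard, hCcyc⟩ : C ⊆ E ∧ #C = z ∧ IsCycle C z := by simpa using hC
  have hz4 : 4 ≤ z := by
    have := hlin.three_le_of_isCycle (hCcyc.mono hCE)
    obtain ⟨m, rfl⟩ := hz
    omega
  have hzn : z * (r - 1) ≤ Fintype.card V := by
    have : Nonempty (Quot (connRel C)) := let ⟨_, vs, _⟩ := hCcyc; ⟨Quot.mk _ (vs 0)⟩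
    have : 0 < nCompsFull C := Nat.card_pos
    have := nCompsFull_add_eq_of_isCycle hunif hlin hmin hCE hCcard hCcyc
    omega
  have hlim := ht ▸ tendsto_chromPoly_sub_div hr hz4 hz hunif hlin hmin hzn
  exact ⟨hlim, exists_forall_pos_of_tendsto_div_pow (by exact_mod_cast ht1) hlim⟩

open Filter in
/-- for a connected `r`-uniform linear hypergraph with even girth `z` and
`t ≥ 1` cycles of length `z`, the difference
`D(k) = P(H,k) - k^{n-(r-1)m}(k^{r-1}-1)^m` has leading term `t·k^{n-z(r-1)+1}`;
in particular `D(k) > 0` for all large `k`. -/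
theorem stmt6 [Fintype V] [DecidableEq V] (E : Finset (Finset V)) (r : ℕ) (hr : 2 ≤ r)
    (hunif : Uniform E r) (hlin : Linear E) (hconn : Connected E)
    (z : ℕ) (hz : Even z) (hcyc : IsCycle E z) (hmin : ∀ p, 2 ≤ p → p < z → ¬ IsCycle E p)
    (t : ℕ) (ht : t = (E.powerset.filter fun S => S.card = z ∧ IsCycle S z).card)
    (ht1 : 1 ≤ t) :
    Tendsto
      (fun k : ℕ =>
        ((chromPoly E k : ℚ) -
            (k : ℚ) ^ ((Fintype.card V : ℤ) - (r - 1 : ℕ) * E.card) *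
              ((k : ℚ) ^ (r - 1) - 1) ^ E.card) /
          (k : ℚ) ^ (Fintype.card V - z * (r - 1) + 1))
      atTop (nhds (t : ℚ)) ∧
    ∃ N : ℕ, ∀ k ≥ N,
      0 < (chromPoly E k : ℚ) -
            (k : ℚ) ^ ((Fintype.card V : ℤ) - (r - 1 : ℕ) * E.card) *
              ((k : ℚ) ^ (r - 1) - 1) ^ E.card :=
  stmt6_general E r hr hunif hlin z hz hmin t ht ht1
end
end

section
/- For a 2-uniform hypergraph (simple graph) G with n vertices and m edges and for all positive integers k, P_{DP}(G, k) ≤ k^{n−m}(k−1)^m, where P_{DP}(G,k) is defined as the minimum over k-fold covers F of the number of F-colorings. -/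
/-
Common definitions: a hypergraph on a finite vertex type `V` is given by its
edge set `E : Finset (Finset V)` (each edge of size ≥ 2).
-/

noncomputable section
open Finset

attribute [local instance] Classical.propDecidable

variable {V : Type*}

/-- for a graph (2-uniform hypergraph) with `n` vertices and `m` edges,
`P_DP(G,k) ≤ k^{n-m}(k-1)^m`, stated in the cleared form
`P_DP(G,k) · k^m ≤ k^n · (k-1)^m`. -/
theorem stmt7 [Fintype V] [DecidableEq V] (E : Finset (Finset V))
    (hE : ∀ e ∈ E, e.card = 2) (k : ℕ) (hk : 0 < k) :
    dpPoly E k * k ^ E.card ≤ k ^ Fintype.card V * (k - 1) ^ E.card := by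
  classical
  haveI : NeZero k := ⟨hk.ne'⟩
  have h2 : ∀ e : {e : Finset V // e ∈ E}, ∃ a b : V, a ≠ b ∧ (e : Finset V) = {a, b} :=
    fun e => Finset.card_eq_two.mp (hE e.1 e.2)
  choose u v huv he using h2
  -- the twisted maps
  let g : {e : Finset V // e ∈ E} → Fin k → Fin k → V → Option (Fin k) :=
    fun e i j w => if w = u e then some i else if w = v e then some j else none
  have hgu : ∀ e i j, g e i j (u e) = some i := by intro e i j; simp [g]
  have hgv : ∀ e i j, g e i j (v e) = some j := by
    intro e i j; simp [g, (huv e).symm, if_neg]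
  have hgo : ∀ e i j w, w ≠ u e → w ≠ v e → g e i j w = none := by
    intro e i j w h1 h2; simp [g, h1, h2]
  have hdom : ∀ e i j, pmDom (g e i j) = (e : Finset V) := by
    intro e i j
    ext w
    rw [he e]
    simp only [pmDom, Finset.mem_filter, Finset.mem_univ, true_and, Finset.mem_insert,
      Finset.mem_singleton]
    by_cases h1 : w = u e
    · subst h1; simp [hgu]
    · by_cases h2 : w = v e
      · subst h2; simp [hgv]
      · simp [hgo e i j w h1 h2, h1, h2]
  have hsub : ∀ e i j (f : V → Fin k), SubMap (g e i j) f ↔ (f (u e) = i ∧ f (v e) = j) := by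
    intro e i j f
    constructor
    · intro h; exact ⟨h _ _ (hgu e i j), h _ _ (hgv e i j)⟩
    · rintro ⟨h1, h2⟩ w cc hw
      by_cases hw1 : w = u e
      · subst hw1; rw [hgu] at hw; cases hw; exact h1
      · by_cases hw2 : w = v e
        · subst hw2; rw [hgv] at hw; cases hw; exact h2
        · rw [hgo e i j w hw1 hw2] at hw; cases hw
  -- the covers
  let F : ({e : Finset V // e ∈ E} → Fin k) → Finset (V → Option (Fin k)) :=
    fun c => E.attach.biUnion fun e =>
      (Finset.univ : Finset (Fin k)).image fun i => g e i (i + c e)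
  have hmemF : ∀ c φ, φ ∈ F c ↔ ∃ e i, g e i (i + c e) = φ := by
    intro c φ
    simp only [F, Finset.mem_biUnion, Finset.mem_image, Finset.mem_univ, true_and]
    constructor
    · rintro ⟨e, -, i, hi⟩; exact ⟨e, i, hi⟩
    · rintro ⟨e, i, hi⟩; exact ⟨e, Finset.mem_attach _ _, i, hi⟩
  have hcov : ∀ c, IsCover E k (F c) := by
    intro c
    constructor
    · intro φ hφ
      obtain ⟨e, i, rfl⟩ := (hmemF c φ).mp hφ
      rw [hdom]; exact e.2
    · intro φ hφ ψ hψ hne hd w cc hφw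
      obtain ⟨e, i, rfl⟩ := (hmemF c φ).mp hφ
      obtain ⟨e', i', rfl⟩ := (hmemF c ψ).mp hψ
      have hee : e = e' := by
        apply Subtype.ext
        rw [← hdom e i (i + c e), ← hdom e' i' (i' + c e'), hd]
      subst hee
      have hii : i ≠ i' := by rintro rfl; exact hne rfl
      by_cases hw1 : w = u e
      · subst hw1
        rw [hgu] at hφw ⊢
        cases hφw
        intro hcon
        exact hii (Option.some.inj hcon).symm
      · by_cases hw2 : w = v e
        · subst hw2
          rw [hgv] at hφw ⊢
          cases hφw
          intro hcon
          exact hii (add_right_cancel (Option.some.inj hcon)).symm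
        · rw [hgo e i _ w hw1 hw2] at hφw; cases hφw
  -- counting F-colorings
  let A : ({e : Finset V // e ∈ E} → Fin k) → Finset (V → Fin k) :=
    fun c => Finset.univ.filter fun f => ∀ e, f (v e) ≠ f (u e) + c e
  have hcount : ∀ c, dpCount k (F c) = (A c).card := by
    intro c
    rw [dpCount, Nat.card_eq_fintype_card, Fintype.card_subtype]
    congr 1
    apply Finset.filter_congr
    intro f _
    constructor
    · intro h e heq
      exact h (g e (f (u e)) (f (u e) + c e)) ((hmemF c _).mpr ⟨e, f (u e), rfl⟩)
        ((hsub e _ _ f).mpr ⟨rfl, heq⟩)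
    · intro h φ hφ hs
      obtain ⟨e, i, rfl⟩ := (hmemF c φ).mp hφ
      obtain ⟨h1, h2⟩ := (hsub e _ _ f).mp hs
      exact h e (by rw [h2, h1])
  -- the averaging argument
  have hsum : ∑ c : {e : Finset V // e ∈ E} → Fin k, (A c).card
      = k ^ Fintype.card V * (k - 1) ^ E.card := by
    have : ∀ c, (A c).card
        = ∑ f : V → Fin k, if (∀ e, f (v e) ≠ f (u e) + c e) then 1 else 0 := by
      intro c; rw [Finset.card_filter]
    simp only [this]
    rw [Finset.sum_comm]
    have hinner : ∀ f : V → Fin k,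
        ∑ c : {e : Finset V // e ∈ E} → Fin k,
          (if (∀ e, f (v e) ≠ f (u e) + c e) then 1 else 0) = (k - 1) ^ E.card := by
      intro f
      rw [← Finset.card_filter]
      have hset : (Finset.univ.filter
            fun c : {e : Finset V // e ∈ E} → Fin k => ∀ e, f (v e) ≠ f (u e) + c e)
          = Fintype.piFinset fun e => Finset.univ.filter
              fun x : Fin k => x ≠ f (v e) - f (u e) := by
        ext c
        simp only [Finset.mem_filter, Finset.mem_univ, true_and, Fintype.mem_piFinset]
        apply forall_congr'
        intro e
        exact not_congr (eq_comm.trans (eq_sub_iff_add_eq' (a := c e) (b := f (v e)) (c := f (u e))).symm)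
      rw [hset, Fintype.card_piFinset]
      have : ∀ e : {e : Finset V // e ∈ E},
          (Finset.univ.filter fun x : Fin k => x ≠ f (v e) - f (u e)).card = k - 1 := by
        intro e
        rw [Finset.filter_ne', Finset.card_erase_of_mem (Finset.mem_univ _),
          Finset.card_univ, Fintype.card_fin]
      simp only [this]
      rw [Finset.prod_const, Finset.card_univ, Fintype.card_coe]
    simp only [hinner]
    rw [Finset.sum_const, Finset.card_univ, Fintype.card_fun, Fintype.card_fin, smul_eq_mul]
  -- pick a minimizing c
  have hne : (Finset.univ : Finset ({e : Finset V // e ∈ E} → Fin k)).Nonempty :=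
    ⟨fun _ => ⟨0, hk⟩, Finset.mem_univ _⟩
  obtain ⟨c₀, -, hmin⟩ := Finset.exists_min_image Finset.univ (fun c => (A c).card) hne
  have hle : dpPoly E k ≤ (A c₀).card := by
    apply Nat.sInf_le
    exact ⟨F c₀, hcov c₀, (hcount c₀).symm⟩
  calc dpPoly E k * k ^ E.card ≤ (A c₀).card * k ^ E.card :=
        Nat.mul_le_mul_right _ hle
    _ = ∑ _c : {e : Finset V // e ∈ E} → Fin k, (A c₀).card := by
        rw [Finset.sum_const, Finset.card_univ, Fintype.card_fun, Fintype.card_fin,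
          Fintype.card_coe, smul_eq_mul, mul_comm]
    _ ≤ ∑ c : {e : Finset V // e ∈ E} → Fin k, (A c).card :=
        Finset.sum_le_sum fun c _ => hmin c (Finset.mem_univ c)
    _ = k ^ Fintype.card V * (k - 1) ^ E.card := hsum
end
end

section
/- Let H be a hypergraph containing an edge e with |e| = n_e ≥ 2 such that H − e has exactly n_e − 1 connected components. Suppose for a given integer k ≥ 2 that P(H − e, k) < (k^{n_e−1}/(k^{n_e−1} − 1)) · P(H, k). Then P_{DP}(H, k) < P(H, k). -/
/-
Common definitions: a hypergraph on a finite vertex type `V` is given by its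
edge set `E : Finset (Finset V)` (each edge of size ≥ 2).
-/

noncomputable section
open Finset

attribute [local instance] Classical.propDecidable

variable {V : Type*}

/-!
Sort the proper colorings of `H - e` by their pattern `q : e → [k]`. Translation by a constant
color preserves properness, so the `k` monochromatic patterns are all realized by the same
number `α` of colorings, and `P(H - e, k) = P(H, k) + kα`; in these terms the hypothesis reads
`k^{|e|} α < P(H - e, k)`. As there are only `k^{|e|}` patterns, some pattern `q` is realized by
more than `α` colorings. Replacing the `k` constant maps on `e` in the natural cover by the `k`
translates `q + i` then removes more than `kα` colorings of `H - e`, leaving fewer than `P(H, k)`.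
-/

section DPColoring

variable [Fintype V] [DecidableEq V] {k : ℕ}

def pmRestrict (e : Finset V) (g : V → Fin k) : V → Option (Fin k) :=
  fun v => if v ∈ e then some (g v) else none

def patternCount (E : Finset (Finset V)) (k : ℕ) (e : Finset V) (q : V → Fin k) : ℕ :=
  #{f : V → Fin k | ProperColoring E k f ∧ ∀ v ∈ e, f v = q v}

def shiftCover (e : Finset V) (q : V → Fin k) : Finset (V → Option (Fin k)) :=
  univ.image fun i => pmRestrict e fun v => q v + i

lemma pmDom_pmRestrict (e : Finset V) (g : V → Fin k) : pmDom (pmRestrict e g) = e := by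
  ext v
  by_cases hv : v ∈ e <;> simp [pmDom, pmRestrict, hv]

omit [Fintype V] in
lemma subMap_pmRestrict_iff (e : Finset V) (g f : V → Fin k) :
    SubMap (pmRestrict e g) f ↔ ∀ v ∈ e, f v = g v := by
  refine ⟨fun h v hv => h v (g v) (if_pos hv), fun h v c hc => ?_⟩
  by_cases hv : v ∈ e
  · rw [pmRestrict, if_pos hv, Option.some.injEq] at hc
    rw [h v hv, hc]
  · simp [pmRestrict, hv] at hc

lemma mem_natCover_iff (E : Finset (Finset V)) (φ : V → Option (Fin k)) :
    φ ∈ natCover E k ↔ ∃ e ∈ E, ∃ i, φ = pmRestrict e fun _ => i := by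
  simp only [natCover, mem_biUnion, mem_image, mem_univ, true_and, eq_comm]
  rfl

omit [Fintype V] [DecidableEq V] in
lemma exists_ne_iff_not_exists_const {α : Type*} [Nonempty α] (e : Finset V) (f : V → α) :
    (∃ u ∈ e, ∃ v ∈ e, f u ≠ f v) ↔ ¬ ∃ c, ∀ v ∈ e, f v = c := by
  constructor
  · rintro ⟨u, hu, v, hv, hne⟩ ⟨c, hc⟩
    exact hne (by rw [hc u hu, hc v hv])
  · intro h
    obtain ⟨u, hu⟩ : e.Nonempty := by
      by_contra he
      rw [not_nonempty_iff_eq_empty] at he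
      exact h ⟨Classical.arbitrary α, by simp [he]⟩
    push Not at h
    obtain ⟨v, hv, hne⟩ := h (f u)
    exact ⟨v, hv, u, hu, hne⟩

lemma avoids_natCover_iff [NeZero k] (E : Finset (Finset V)) (f : V → Fin k) :
    (∀ φ ∈ natCover E k, ¬ SubMap φ f) ↔ ProperColoring E k f := by
  simp only [mem_natCover_iff, ProperColoring, exists_ne_iff_not_exists_const, not_exists]
  constructor
  · rintro h e he i hi
    exact h _ ⟨e, he, i, rfl⟩ ((subMap_pmRestrict_iff _ _ _).mpr hi)
  · rintro h _ ⟨e, he, i, rfl⟩ hsub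
    exact h e he i ((subMap_pmRestrict_iff _ _ _).mp hsub)

omit [Fintype V] [DecidableEq V] in
lemma properColoring_add_const [NeZero k] (E : Finset (Finset V)) (f : V → Fin k) (c : Fin k) :
    ProperColoring E k (fun v => f v + c) ↔ ProperColoring E k f := by
  simp only [ProperColoring, ne_eq, add_left_inj]

lemma patternCount_add_const [NeZero k] (E : Finset (Finset V)) (e : Finset V)
    (q : V → Fin k) (c : Fin k) :
    patternCount E k e (fun v => q v + c) = patternCount E k e q := by
  refine card_bij' (fun f _ v => f v - c) (fun f _ v => f v + c) ?_ ?_ ?_ ?_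
  · simp only [mem_filter, mem_univ, true_and]
    rintro f ⟨hf, hq⟩
    refine ⟨?_, fun v hv => by rw [hq v hv, add_sub_cancel_right]⟩
    simpa only [sub_eq_add_neg] using (properColoring_add_const E f (-c)).mpr hf
  · simp only [mem_filter, mem_univ, true_and]
    rintro f ⟨hf, hq⟩
    exact ⟨(properColoring_add_const E f c).mpr hf, fun v hv => by rw [hq v hv]⟩
  · intro f _; simp
  · intro f _; simp

lemma card_exists_add_const [NeZero k] (E : Finset (Finset V)) {e : Finset V}
    (he : e.Nonempty) (q : V → Fin k) :
    #{f : V → Fin k | ProperColoring E k f ∧ ∃ i, ∀ v ∈ e, f v = q v + i}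
      = k * patternCount E k e q := by
  obtain ⟨v₀, hv₀⟩ := he
  rw [card_eq_sum_card_fiberwise (f := fun f : V → Fin k => f v₀ - q v₀)
    (t := univ) fun _ _ => mem_univ _]
  calc ∑ i : Fin k, #{f ∈ {f : V → Fin k | ProperColoring E k f ∧ ∃ i, ∀ v ∈ e, f v = q v + i}
          | f v₀ - q v₀ = i}
      = ∑ i : Fin k, patternCount E k e (fun v => q v + i) := by
        refine sum_congr rfl fun i _ => congrArg card (ext fun f => ?_)
        simp only [mem_filter, mem_univ, true_and]
        constructor
        · rintro ⟨⟨hf, j, hj⟩, rfl⟩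
          exact ⟨hf, fun v hv => by rw [hj v hv, hj v₀ hv₀, add_sub_cancel_left]⟩
        · rintro ⟨hf, hi⟩
          exact ⟨⟨hf, i, hi⟩, by rw [hi v₀ hv₀, add_sub_cancel_left]⟩
    _ = k * patternCount E k e q := by simp [patternCount_add_const]

lemma exists_lt_patternCount (E : Finset (Finset V)) (e : Finset V) {a : ℕ}
    (h : k ^ e.card * a < chromPoly E k) : ∃ q : V → Fin k, a < patternCount E k e q := by
  rw [chromPoly, Nat.card_eq_fintype_card, Fintype.card_subtype] at h
  obtain ⟨b, -, hb⟩ := exists_lt_card_fiber_of_mul_lt_card_of_maps_to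
    (f := fun f : V → Fin k => fun v : e => f v) (t := univ) (fun _ _ => mem_univ _)
    (by simpa using h)
  obtain ⟨q, hq⟩ := card_pos.mp (a.zero_le.trans_lt hb)
  refine ⟨q, hb.trans_le (card_le_card fun f hf => ?_)⟩
  simp only [mem_filter, mem_univ, true_and] at hf hq ⊢
  exact ⟨hf.1, fun v hv => congrFun (hf.2.trans hq.2.symm) ⟨v, hv⟩⟩

lemma chromPoly_erase [NeZero k] {E : Finset (Finset V)} {e : Finset V} (he : e ∈ E)
    (hne : e.Nonempty) :
    chromPoly (E.erase e) k = chromPoly E k + k * patternCount (E.erase e) k e 0 := by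
  have hsplit (f : V → Fin k) : ProperColoring E k f ↔
      ProperColoring (E.erase e) k f ∧ ¬ ∃ i, ∀ v ∈ e, f v = (0 : V → Fin k) v + i := by
    simp only [Pi.zero_apply, zero_add, ← exists_ne_iff_not_exists_const]
    refine ⟨fun h => ⟨fun e' he' => h e' (mem_of_mem_erase he'), h e he⟩, ?_⟩
    rintro ⟨h, hproper_e⟩ e' he'
    by_cases hee : e' = e
    · exact hee ▸ hproper_e
    · exact h e' (mem_erase.mpr ⟨hee, he'⟩)
  simp only [chromPoly, Nat.card_eq_fintype_card, Fintype.card_subtype, hsplit,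
    ← card_exists_add_const _ hne, ← filter_filter]
  rw [add_comm, card_filter_add_card_filter_not]

omit [Fintype V] in
lemma pmRestrict_ne_of_ne {d : Finset V} {g g' : V → Fin k} (h : ∀ v ∈ d, g v ≠ g' v)
    (v : V) (c : Fin k) (hc : pmRestrict d g v = some c) : pmRestrict d g' v ≠ some c := by
  by_cases hv : v ∈ d
  · simp only [pmRestrict, if_pos hv, Option.some.injEq, ne_eq] at hc ⊢
    exact hc ▸ (h v hv).symm
  · simp [pmRestrict, hv] at hc

lemma isCover_natCover {E E' : Finset (Finset V)} (h : E' ⊆ E) : IsCover E k (natCover E' k) := by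
  simp only [IsCover, mem_natCover_iff]
  refine ⟨?_, ?_⟩
  · rintro _ ⟨d, hd, i, rfl⟩
    rw [pmDom_pmRestrict]
    exact h hd
  · rintro _ ⟨d, -, i, rfl⟩ _ ⟨d', -, j, rfl⟩ hne hdom
    simp only [pmDom_pmRestrict] at hdom
    subst hdom
    exact pmRestrict_ne_of_ne fun _ _ hij => hne (hij ▸ rfl)

lemma isCover_shiftCover {E : Finset (Finset V)} {e : Finset V} (he : e ∈ E) (q : V → Fin k) :
    IsCover E k (shiftCover e q) := by
  simp only [IsCover, shiftCover, mem_image, mem_univ, true_and]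
  refine ⟨?_, ?_⟩
  · rintro _ ⟨i, rfl⟩
    exact (pmDom_pmRestrict e _).symm ▸ he
  · rintro _ ⟨i, rfl⟩ _ ⟨j, rfl⟩ hne -
    exact pmRestrict_ne_of_ne fun v _ hij => hne (add_left_cancel hij ▸ rfl)

omit [DecidableEq V] in
lemma IsCover.union {E : Finset (Finset V)} {F₁ F₂ : Finset (V → Option (Fin k))}
    (h₁ : IsCover E k F₁) (h₂ : IsCover E k F₂)
    (hdom : ∀ φ ∈ F₁, ∀ ψ ∈ F₂, pmDom φ ≠ pmDom ψ) : IsCover E k (F₁ ∪ F₂) := by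
  refine ⟨fun φ hφ => (mem_union.mp hφ).elim (h₁.1 φ) (h₂.1 φ), ?_⟩
  intro φ hφ ψ hψ hne hφψ
  rcases mem_union.mp hφ with hφ | hφ <;> rcases mem_union.mp hψ with hψ | hψ
  · exact h₁.2 φ hφ ψ hψ hne hφψ
  · exact absurd hφψ (hdom φ hφ ψ hψ)
  · exact absurd hφψ.symm (hdom ψ hψ φ hφ)
  · exact h₂.2 φ hφ ψ hψ hne hφψ

lemma isCover_natCover_erase_union_shiftCover {E : Finset (Finset V)} {e : Finset V}
    (he : e ∈ E) (q : V → Fin k) : IsCover E k (natCover (E.erase e) k ∪ shiftCover e q) := by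
  refine (isCover_natCover (erase_subset e E)).union (isCover_shiftCover he q) ?_
  simp only [mem_natCover_iff, shiftCover, mem_image, mem_univ, true_and]
  rintro _ ⟨d, hd, i, rfl⟩ _ ⟨j, rfl⟩
  simpa only [pmDom_pmRestrict] using ne_of_mem_erase hd

lemma avoids_shiftCover_iff (e : Finset V) (q f : V → Fin k) :
    (∀ φ ∈ shiftCover e q, ¬ SubMap φ f) ↔ ¬ ∃ i, ∀ v ∈ e, f v = q v + i := by
  simp [shiftCover, subMap_pmRestrict_iff]

lemma dpCount_natCover_union_shiftCover [NeZero k] (E : Finset (Finset V)) {e : Finset V}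
    (hne : e.Nonempty) (q : V → Fin k) :
    dpCount k (natCover E k ∪ shiftCover e q) + k * patternCount E k e q = chromPoly E k := by
  have havoid (f : V → Fin k) : (∀ φ ∈ natCover E k ∪ shiftCover e q, ¬ SubMap φ f) ↔
      ProperColoring E k f ∧ ¬ ∃ i, ∀ v ∈ e, f v = q v + i := by
    rw [← avoids_natCover_iff, ← avoids_shiftCover_iff]
    simp only [mem_union, or_imp, forall_and]
  simp only [dpCount, chromPoly, Nat.card_eq_fintype_card, Fintype.card_subtype, havoid,
    ← card_exists_add_const _ hne, ← filter_filter]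
  rw [add_comm, card_filter_add_card_filter_not]

end DPColoring

theorem stmt10_general [Fintype V] [DecidableEq V] (E : Finset (Finset V))
    (hE : ∀ e' ∈ E, 2 ≤ e'.card) (e : Finset V) (he : e ∈ E)
    (k : ℕ) (hk : 2 ≤ k)
    (hineq : (k ^ (e.card - 1) - 1) * chromPoly (E.erase e) k
              < k ^ (e.card - 1) * chromPoly E k) :
    dpPoly E k < chromPoly E k := by
  have : NeZero k := ⟨by omega⟩
  have hne : e.Nonempty := card_pos.mp (by linarith [hE e he])
  have hsplit := chromPoly_erase (k := k) he hne
  set α := patternCount (E.erase e) k e 0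
  have hα : k ^ e.card * α < chromPoly (E.erase e) k := by
    have hpow : k ^ e.card = k ^ (e.card - 1) * k := by
      rw [← pow_succ, Nat.sub_add_cancel hne.card_pos]
    have hK : 1 ≤ k ^ (e.card - 1) := Nat.one_le_pow _ _ (by omega)
    rw [hsplit] at hineq ⊢
    rw [hpow]
    zify [hK] at hineq ⊢
    nlinarith
  obtain ⟨q, hq⟩ := exists_lt_patternCount (E.erase e) e hα
  have hcount := dpCount_natCover_union_shiftCover (E.erase e) hne q
  calc dpPoly E k ≤ dpCount k (natCover (E.erase e) k ∪ shiftCover e q) :=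
        Nat.sInf_le ⟨_, isCover_natCover_erase_union_shiftCover he q, rfl⟩
    _ < chromPoly E k := by nlinarith

/-- if `c(H-e) = |e| - 1` and
`P(H-e,k) < (k^{n_e-1}/(k^{n_e-1}-1))·P(H,k)` (cleared of denominators), then
`P_DP(H,k) < P(H,k)`. -/
theorem stmt10 [Fintype V] [DecidableEq V] (E : Finset (Finset V))
    (hE : ∀ e' ∈ E, 2 ≤ e'.card) (e : Finset V) (he : e ∈ E)
    (hcomp : nCompsFull (E.erase e) = e.card - 1) (k : ℕ) (hk : 2 ≤ k)
    (hineq : (k ^ (e.card - 1) - 1) * chromPoly (E.erase e) k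
              < k ^ (e.card - 1) * chromPoly E k) :
    dpPoly E k < chromPoly E k :=
  stmt10_general E hE e he k hk hineq
end
end

section
/- Let H be an r-uniform hypergraph (r ≥ 2) with n vertices and m edges. Then for every positive integer k, P_{DP}(H, k) ≤ k^{n − (r−1)m} · (k^{r−1} − 1)^m, provided k^{r−1} ≥ 1 and n ≥ (r−1)m (more generally, the inequality holds whenever the right side is defined; when (r−1)m > n the inequality is interpreted via the rational expression and still holds as P_{DP}(H,k)·k^{(r-1)m-n} ≤ (k^{r−1}−1)^m). -/
/-
Common definitions: a hypergraph on a finite vertex type `V` is given by its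
edge set `E : Finset (Finset V)` (each edge of size ≥ 2).
-/

noncomputable section
open Finset

attribute [local instance] Classical.propDecidable

variable {V : Type*}

/-!
Add the edges one at a time. Given a cover of `E` and a new edge `e = {w} ∪ s` with `w ∉ s`,
sort the colorings `f` by their pattern `v ↦ f v - f w` on `s`; there are `k ^ |s|` patterns.
For a pattern `g`, the `k` shifts `w ↦ c, v ↦ g v + c` (`c ∈ ℤ/k`) are pairwise disjoint
maps on `e`, and a coloring contains one of them exactly when its pattern is `g`. Adding them
for the most popular pattern kills at least a `1 / k ^ |s|` fraction of the surviving
colorings.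
-/

section

variable [Fintype V] {k : ℕ}

def dpColorings (k : ℕ) (F : Finset (V → Option (Fin k))) : Finset (V → Fin k) :=
  univ.filter fun f => ∀ φ ∈ F, ¬ SubMap φ f

lemma dpCount_eq_card_dpColorings (F : Finset (V → Option (Fin k))) :
    dpCount k F = #(dpColorings k F) := by
  rw [dpCount, Nat.card_eq_fintype_card]
  exact Fintype.card_of_subtype _ fun f => by simp [dpColorings]

lemma isCover_empty (E : Finset (Finset V)) (k : ℕ) :
    IsCover E k (∅ : Finset (V → Option (Fin k))) := by
  simp [IsCover]

lemma dpCount_empty (k : ℕ) :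
    dpCount k (∅ : Finset (V → Option (Fin k))) = k ^ Fintype.card V := by
  simp [dpCount_eq_card_dpColorings, dpColorings]

lemma dpPoly_le_dpCount {E : Finset (Finset V)} {F : Finset (V → Option (Fin k))}
    (hF : IsCover E k F) : dpPoly E k ≤ dpCount k F :=
  Nat.sInf_le ⟨F, hF, rfl⟩

lemma exists_isCover_dpCount_eq_dpPoly (E : Finset (Finset V)) (k : ℕ) :
    ∃ F, IsCover E k F ∧ dpCount k F = dpPoly E k := by
  obtain ⟨F, hF, hmin⟩ := Nat.sInf_mem (s := {n | ∃ F, IsCover E k F ∧ n = dpCount k F})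
    ⟨_, ∅, isCover_empty E k, rfl⟩
  exact ⟨F, hF, hmin.symm⟩

end

lemma Finset.exists_card_filter_ne_mul_le {α β : Type*} [Fintype β] [Nonempty β]
    [DecidableEq β] (S : Finset α) (π : α → β) :
    ∃ b, #(S.filter fun a => π a ≠ b) * Fintype.card β ≤ #S * (Fintype.card β - 1) := by
  obtain ⟨b, -, hb⟩ :
      ∃ b ∈ (univ : Finset β), #S ≤ Fintype.card β * #(S.filter fun a => π a = b) := by
    apply exists_le_of_sum_le univ_nonempty
    rw [sum_const, ← mul_sum, ← card_eq_sum_card_fiberwise fun _ _ => mem_univ _, card_univ,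
      smul_eq_mul]
  refine ⟨b, ?_⟩
  have hsplit := card_filter_add_card_filter_not (s := S) fun a => π a = b
  have key : #(S.filter fun a => π a ≠ b) * Fintype.card β + #S ≤ #S * Fintype.card β := by
    rw [← hsplit, add_mul]
    linarith [mul_comm (Fintype.card β) #(S.filter fun a => π a = b)]
  rw [Nat.mul_sub_one]
  omega

section Shift

variable [DecidableEq V] {k : ℕ} (w : V) (s : Finset V)

def pattern (f : V → Fin k) : s → Fin k := fun v => f v - f w

def shiftMap (g : s → Fin k) (c : Fin k) : V → Option (Fin k) := fun v =>
  if h : v ∈ s then some (g ⟨v, h⟩ + c) else if v = w then some c else none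

variable {w s}

lemma pmDom_shiftMap [Fintype V] (g : s → Fin k) (c : Fin k) :
    pmDom (shiftMap w s g c) = insert w s := by
  ext v
  simp only [pmDom, mem_filter, mem_univ, true_and, mem_insert]
  unfold shiftMap
  split_ifs <;> simp_all

lemma shiftMap_ne_of_ne {g : s → Fin k} {c c' : Fin k} (hc : c ≠ c') (v : V) (a : Fin k)
    (ha : shiftMap w s g c v = some a) : shiftMap w s g c' v ≠ some a := by
  unfold shiftMap at *
  split_ifs at * <;> simp only [Option.some.injEq] at ha ⊢ <;> intro h
  · exact hc (add_left_cancel (ha.trans (Option.some.inj h).symm))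
  · exact hc (ha.trans (Option.some.inj h).symm)

lemma subMap_shiftMap_iff [NeZero k] (hw : w ∉ s) (g : s → Fin k) (c : Fin k)
    (f : V → Fin k) :
    SubMap (shiftMap w s g c) f ↔ f w = c ∧ pattern w s f = g := by
  constructor
  · intro h
    have hfw : f w = c := h w c (by simp [shiftMap, hw])
    refine ⟨hfw, funext fun v => ?_⟩
    rw [pattern, h v (g v + c) (by simp [shiftMap]), hfw, add_sub_cancel_right]
  · rintro ⟨rfl, rfl⟩ v a ha
    unfold shiftMap pattern at ha
    split_ifs at ha with hs hvw
    · simp [← Option.some.inj ha]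
    · simp_all

variable (k w) in
def shiftMaps [Fintype V] (g : s → Fin k) : Finset (V → Option (Fin k)) :=
  univ.image (shiftMap w s g)

lemma isCover_insert_union_shiftMaps [Fintype V] {E : Finset (Finset V)}
    {F : Finset (V → Option (Fin k))} (hF : IsCover E k F) (he : insert w s ∉ E)
    (g : s → Fin k) :
    IsCover (insert (insert w s) E) k (F ∪ shiftMaps k w g) := by
  have hdom_shift : ∀ φ ∈ shiftMaps k w g, pmDom φ = insert w s := by
    simp only [shiftMaps, mem_image, mem_univ, true_and, forall_exists_index]
    rintro _ c rfl
    exact pmDom_shiftMap g c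
  refine ⟨fun φ hφ => ?_, fun φ hφ ψ hψ hne hdom => ?_⟩
  · rcases mem_union.mp hφ with hφ | hφ
    · exact mem_insert_of_mem (hF.1 φ hφ)
    · exact hdom_shift φ hφ ▸ mem_insert_self _ _
  rcases mem_union.mp hφ with hφ | hφ <;> rcases mem_union.mp hψ with hψ | hψ
  · exact hF.2 φ hφ ψ hψ hne hdom
  · exact absurd (hdom ▸ hF.1 φ hφ) (hdom_shift ψ hψ ▸ he)
  · exact absurd (hdom ▸ hF.1 ψ hψ) (hdom_shift φ hφ ▸ he)
  · obtain ⟨c, -, rfl⟩ := mem_image.mp hφ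
    obtain ⟨c', -, rfl⟩ := mem_image.mp hψ
    exact shiftMap_ne_of_ne fun h => hne (h ▸ rfl)

lemma dpColorings_union_shiftMaps [Fintype V] [NeZero k] (hw : w ∉ s)
    (F : Finset (V → Option (Fin k))) (g : s → Fin k) :
    dpColorings k (F ∪ shiftMaps k w g) =
      (dpColorings k F).filter fun f => pattern w s f ≠ g := by
  ext f
  simp [dpColorings, shiftMaps, or_imp, forall_and, subMap_shiftMap_iff hw]

lemma dpPoly_insert_mul_le [Fintype V] [NeZero k] (hw : w ∉ s) {E : Finset (Finset V)}
    (he : insert w s ∉ E) :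
    dpPoly (insert (insert w s) E) k * k ^ #s ≤ dpPoly E k * (k ^ #s - 1) := by
  obtain ⟨F, hF, hFmin⟩ := exists_isCover_dpCount_eq_dpPoly E k
  obtain ⟨g, hg⟩ := (dpColorings k F).exists_card_filter_ne_mul_le (pattern w s)
  simp only [Fintype.card_fun, Fintype.card_coe, Fintype.card_fin] at hg
  calc dpPoly (insert (insert w s) E) k * k ^ #s
      ≤ dpCount k (F ∪ shiftMaps k w g) * k ^ #s :=
        Nat.mul_le_mul_right _ (dpPoly_le_dpCount (isCover_insert_union_shiftMaps hF he g))
    _ ≤ dpPoly E k * (k ^ #s - 1) := by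
        rwa [← hFmin, dpCount_eq_card_dpColorings, dpCount_eq_card_dpColorings,
          dpColorings_union_shiftMaps hw]

end Shift

/-- for an `r`-uniform hypergraph with `n` vertices and `m` edges,
`P_DP(H,k) ≤ k^{n-(r-1)m}(k^{r-1}-1)^m`, stated in the cleared form
`P_DP(H,k) · k^{(r-1)m} ≤ k^n · (k^{r-1}-1)^m`. -/
theorem stmt14 [Fintype V] [DecidableEq V] (E : Finset (Finset V)) (r : ℕ) (hr : 2 ≤ r)
    (hunif : Uniform E r) (k : ℕ) (hk : 0 < k) :
    dpPoly E k * k ^ ((r - 1) * E.card)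
      ≤ k ^ Fintype.card V * (k ^ (r - 1) - 1) ^ E.card := by
  have : NeZero k := .of_pos hk
  induction E using Finset.induction_on with
  | empty =>
    simpa using (dpPoly_le_dpCount (isCover_empty (∅ : Finset (Finset V)) k)).trans
      (dpCount_empty (V := V) k).le
  | @insert e E he ih =>
    have hcard : #e = r := hunif e (mem_insert_self e E)
    obtain ⟨w, hw⟩ : e.Nonempty := card_pos.mp (by omega)
    have hs : #(e.erase w) = r - 1 := by rw [card_erase_of_mem hw, hcard]
    have hstep : dpPoly (insert e E) k * k ^ (r - 1) ≤ dpPoly E k * (k ^ (r - 1) - 1) := by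
      simpa only [insert_erase hw, hs] using
        dpPoly_insert_mul_le (k := k) (notMem_erase w e) (E := E) (by rwa [insert_erase hw])
    rw [card_insert_of_notMem he]
    calc dpPoly (insert e E) k * k ^ ((r - 1) * (#E + 1))
        = dpPoly (insert e E) k * k ^ (r - 1) * k ^ ((r - 1) * #E) := by ring
      _ ≤ dpPoly E k * (k ^ (r - 1) - 1) * k ^ ((r - 1) * #E) := by gcongr
      _ = dpPoly E k * k ^ ((r - 1) * #E) * (k ^ (r - 1) - 1) := by ring
      _ ≤ k ^ Fintype.card V * (k ^ (r - 1) - 1) ^ #E * (k ^ (r - 1) - 1) := by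
        exact Nat.mul_le_mul_right _ (ih fun e' he' => hunif e' (mem_insert_of_mem he'))
      _ = k ^ Fintype.card V * (k ^ (r - 1) - 1) ^ (#E + 1) := by ring
end
end

section
/- Let H be a hypergraph on n vertices and M = K₁ ∨ H the join of H with a single vertex w. Let F be a perfect k-fold cover of M (every edge has exactly k partial maps), with level structure Φ = {Φ_j : j ∈ [k]} where Φ_j collects, for each vertex v_i of H, the partial map on edge {w, v_i} assigning j to w. If at least k − 1 of the Φ_j are level mappings, then all k are level mappings, there is a bijection between F-colorings of M and proper k-colorings of M, and hence P_{DP}(M, F) = P(M, k). -/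
/-
Common definitions: a hypergraph on a finite vertex type `V` is given by its
edge set `E : Finset (Finset V)` (each edge of size ≥ 2).
-/

noncomputable section
open Finset

attribute [local instance] Classical.propDecidable

variable {V : Type*}

/-!
The spoke maps of `F` on `{w, v}` give, at each vertex `v` of `H`, a permutation `π v` of the
colours (level `j` ↦ colour of `v`). Over an edge `e` of `H` the `k` members of `F` are pairwise
disjoint, so once `k - 1` levels are realised there, the last member is forced to be the missing
level. Hence `F` is the natural cover of `M` with the colours at every vertex relabelled by `π`,
and undoing that relabelling turns `F`-colourings into proper colourings.
-/

section PartialMaps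

variable {α : Type*} {k : ℕ}

def permPM (σ : α → Equiv.Perm (Fin k)) (φ : α → Option (Fin k)) : α → Option (Fin k) :=
  fun x => (φ x).map (σ x)

lemma subMap_permPM_iff {σ : α → Equiv.Perm (Fin k)} {φ : α → Option (Fin k)} {g : α → Fin k} :
    SubMap (permPM σ φ) (fun x => σ x (g x)) ↔ SubMap φ g := by
  simp [SubMap, permPM]

variable [Fintype α]

lemma mem_pmDom {φ : α → Option (Fin k)} {x : α} : x ∈ pmDom φ ↔ (φ x).isSome := by
  simp [pmDom]

lemma ext_of_pmDom_eq {φ ψ : α → Option (Fin k)} (hdom : pmDom φ = pmDom ψ)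
    (h : ∀ x ∈ pmDom φ, φ x = ψ x) : φ = ψ := by
  funext x
  by_cases hx : x ∈ pmDom φ
  · exact h x hx
  · have hy : x ∉ pmDom ψ := hdom ▸ hx
    rw [mem_pmDom, Option.not_isSome_iff_eq_none] at hx hy
    rw [hx, hy]

lemma IsCover.eq_of_apply_eq {D : Finset (Finset α)} {F : Finset (α → Option (Fin k))}
    (hF : IsCover D k F) {φ ψ : α → Option (Fin k)} (hφ : φ ∈ F) (hψ : ψ ∈ F)
    (hdom : pmDom φ = pmDom ψ) {x : α} {c : Fin k} (hφx : φ x = some c) (hψx : ψ x = some c) :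
    φ = ψ := by
  by_contra hne
  exact hF.2 φ hφ ψ hψ hne hdom x c hφx hψx

lemma dpCount_image_permPM (σ : α → Equiv.Perm (Fin k)) (F : Finset (α → Option (Fin k))) :
    dpCount k (F.image (permPM σ)) = dpCount k F := by
  refine (Nat.card_congr ((Equiv.piCongrRight σ).subtypeEquiv fun g => ?_)).symm
  simp only [forall_mem_image]
  exact forall₂_congr fun φ _ => not_congr subMap_permPM_iff.symm

end PartialMaps

section Covers

variable {α : Type*} [DecidableEq α] {k : ℕ}

def constPM (d : Finset α) (j : Fin k) : α → Option (Fin k) :=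
  fun x => if x ∈ d then some j else none

lemma permPM_constPM_apply (σ : α → Equiv.Perm (Fin k)) (d : Finset α) (j : Fin k) (x : α) :
    permPM σ (constPM d j) x = if x ∈ d then some (σ x j) else none := by
  unfold permPM constPM
  split_ifs <;> rfl

lemma subMap_constPM_iff {d : Finset α} {j : Fin k} {f : α → Fin k} :
    SubMap (constPM d j) f ↔ ∀ x ∈ d, f x = j := by
  simp [SubMap, constPM]

variable [Fintype α] {D : Finset (Finset α)} {F : Finset (α → Option (Fin k))}
  {σ : α → Equiv.Perm (Fin k)} {d : Finset α}

lemma pmDom_permPM_constPM (σ : α → Equiv.Perm (Fin k)) (d : Finset α) (j : Fin k) :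
    pmDom (permPM σ (constPM d j)) = d := by
  ext x
  simp [mem_pmDom, permPM_constPM_apply]

lemma mem_natCover {φ : α → Option (Fin k)} :
    φ ∈ natCover D k ↔ ∃ e ∈ D, ∃ j, constPM e j = φ := by
  simp only [natCover, mem_biUnion, mem_image, mem_univ, true_and]
  rfl

lemma eq_permPM_constPM_of_ne (hF : IsCover D k F) {j₀ : Fin k}
    (hmem : ∀ j ≠ j₀, permPM σ (constPM d j) ∈ F) {ψ : α → Option (Fin k)} (hψ : ψ ∈ F)
    (hdom : pmDom ψ = d) (hne : ∀ j ≠ j₀, ψ ≠ permPM σ (constPM d j)) :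
    ψ = permPM σ (constPM d j₀) := by
  refine ext_of_pmDom_eq (by rw [hdom, pmDom_permPM_constPM]) fun x hx => ?_
  obtain ⟨c, hc⟩ := Option.isSome_iff_exists.mp (mem_pmDom.mp hx)
  rw [hdom] at hx
  -- the colour `c` at `x` is taken by level `(σ x).symm c`, which must be `j₀`
  have hlevel : permPM σ (constPM d ((σ x).symm c)) x = some c := by
    simp [permPM_constPM_apply, hx]
  obtain rfl : (σ x).symm c = j₀ := by
    by_contra hj
    exact hne _ hj (hF.eq_of_apply_eq hψ (hmem _ hj)
      (by rw [hdom, pmDom_permPM_constPM]) hc hlevel)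
  rw [hc, hlevel]

lemma permPM_constPM_mem_of_forall_ne (hF : IsCover D k F)
    (hperf : (F.filter fun φ => pmDom φ = d).card = k) {j₀ : Fin k}
    (hmem : ∀ j ≠ j₀, permPM σ (constPM d j) ∈ F) : ∀ j, permPM σ (constPM d j) ∈ F := by
  intro j
  rcases eq_or_ne j j₀ with rfl | hj
  · set T := (univ.erase j).image fun i => permPM σ (constPM d i)
    have hT : T.card < (F.filter fun φ => pmDom φ = d).card := by
      rw [hperf]
      calc T.card ≤ (univ.erase j).card := card_image_le
        _ < k := by simp [j.pos]
    obtain ⟨ψ, hψ, hψT⟩ := exists_mem_notMem_of_card_lt_card hT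
    obtain ⟨hψF, hdom⟩ := mem_filter.mp hψ
    rwa [← eq_permPM_constPM_of_ne hF hmem hψF hdom fun i hi h =>
      hψT (mem_image.mpr ⟨i, mem_erase.mpr ⟨hi, mem_univ i⟩, h.symm⟩)]
  · exact hmem j hj

lemma eq_image_permPM_natCover (hF : IsCover D k F) (hk : 0 < k)
    (hmem : ∀ d ∈ D, ∀ j, permPM σ (constPM d j) ∈ F) :
    F = (natCover D k).image (permPM σ) := by
  ext φ
  simp only [mem_image, mem_natCover]
  constructor
  · intro hφ
    by_contra! hne
    have := eq_permPM_constPM_of_ne hF (fun j _ => hmem _ (hF.1 φ hφ) j) hφ rfl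
      (fun j _ h => hne _ ⟨_, hF.1 φ hφ, j, rfl⟩ h.symm) (j₀ := ⟨0, hk⟩)
    exact hne _ ⟨_, hF.1 φ hφ, _, rfl⟩ this.symm
  · rintro ⟨_, ⟨e, he, j, rfl⟩, rfl⟩
    exact hmem e he j

lemma dpCount_natCover (D : Finset (Finset α)) (hk : 0 < k) :
    dpCount k (natCover D k) = chromPoly D k := by
  refine Nat.card_congr (Equiv.subtypeEquivRight fun f => ?_)
  simp only [mem_natCover, ProperColoring]
  constructor
  · intro h e he
    by_contra! hconst
    obtain rfl | ⟨u, hu⟩ := e.eq_empty_or_nonempty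
    · exact h _ ⟨∅, he, ⟨0, hk⟩, rfl⟩ (subMap_constPM_iff.mpr (by simp))
    · exact h _ ⟨e, he, f u, rfl⟩ (subMap_constPM_iff.mpr fun v hv => (hconst u hu v hv).symm)
  · rintro h _ ⟨e, he, j, rfl⟩ hsub
    obtain ⟨u, hu, v, hv, hne⟩ := h e he
    rw [subMap_constPM_iff] at hsub
    exact hne ((hsub u hu).trans (hsub v hv).symm)

end Covers

section Join

variable {k : ℕ}

/-- `π v j` is the colour at `v` of the level-`j` spoke map on `{w, v}`; the normalisation
`φ w = j` means the apex `w = none` keeps its colours. -/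
def levelPerm (π : V → Equiv.Perm (Fin k)) : Option V → Equiv.Perm (Fin k) :=
  fun x => x.elim 1 π

@[simp] lemma levelPerm_none (π : V → Equiv.Perm (Fin k)) : levelPerm π none = 1 := rfl

@[simp] lemma levelPerm_some (π : V → Equiv.Perm (Fin k)) (v : V) :
    levelPerm π (some v) = π v := rfl

variable [Fintype V] [DecidableEq V] {E : Finset (Finset V)}
  {F : Finset (Option V → Option (Fin k))}

lemma mem_joinOne {d : Finset (Option V)} :
    d ∈ joinOne E ↔ (∃ e ∈ E, e.image some = d) ∨ ∃ v, {none, some v} = d := by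
  simp [joinOne]

lemma exists_levelPerm (hF : IsCover (joinOne E) k F)
    (hnorm : ∀ (j : Fin k) (v : V),
      ∃ φ ∈ F, pmDom φ = ({none, some v} : Finset (Option V)) ∧ φ none = some j) :
    ∃ π : V → Equiv.Perm (Fin k), ∀ v j, permPM (levelPerm π) (constPM {none, some v} j) ∈ F := by
  choose Φ hΦF hΦdom hΦnone using hnorm
  have hdef : ∀ j v, (Φ j v (some v)).isSome := fun j v => mem_pmDom.mp (by simp [hΦdom])
  set p : V → Fin k → Fin k := fun v j => (Φ j v (some v)).get (hdef j v)
  have hp : ∀ v j, Φ j v (some v) = some (p v j) := fun v j => (Option.some_get _).symm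
  have hinj : ∀ v, Function.Injective (p v) := by
    intro v j j' h
    have hΦ := hF.eq_of_apply_eq (hΦF j v) (hΦF j' v) ((hΦdom j v).trans (hΦdom j' v).symm)
      (hp v j) (h ▸ hp v j')
    have hj := hΦnone j v
    rw [hΦ, hΦnone j' v] at hj
    exact (Option.some_injective _ hj).symm
  refine ⟨fun v => Equiv.ofBijective (p v) (Finite.injective_iff_bijective.mp (hinj v)),
    fun v j => ?_⟩
  convert hΦF j v using 1
  refine ext_of_pmDom_eq (by rw [pmDom_permPM_constPM, hΦdom]) fun x hx => ?_
  rw [pmDom_permPM_constPM, mem_insert, mem_singleton] at hx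
  rcases hx with rfl | rfl
  · simp [permPM_constPM_apply, hΦnone]
  · simp [permPM_constPM_apply, hp]

lemma levelMap_iff (hF : IsCover (joinOne E) k F) {π : V → Equiv.Perm (Fin k)}
    (hspoke : ∀ v j, permPM (levelPerm π) (constPM {none, some v} j) ∈ F) {j : Fin k} :
    LevelMap E k F j ↔ ∀ e ∈ E, permPM (levelPerm π) (constPM (e.image some) j) ∈ F := by
  have hspoke_none : ∀ v, permPM (levelPerm π) (constPM {none, some v} j) none = some j := by
    simp [permPM_constPM_apply]
  refine forall₂_congr fun e he => ⟨?_, fun h => ⟨_, h, pmDom_permPM_constPM .., ?_⟩⟩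
  · rintro ⟨ψ, hψ, hdom, hagree⟩
    suffices ψ = permPM (levelPerm π) (constPM (e.image some) j) from this ▸ hψ
    refine ext_of_pmDom_eq (by rw [hdom, pmDom_permPM_constPM]) fun x hx => ?_
    rw [hdom] at hx
    obtain ⟨v, hv, rfl⟩ := mem_image.mp hx
    rw [hagree v hv _ (hspoke v j) ⟨pmDom_permPM_constPM .., hspoke_none v⟩]
    simp [permPM_constPM_apply, hv]
  · rintro v hv φ hφ ⟨hdom, hφj⟩
    rw [hF.eq_of_apply_eq hφ (hspoke v j) (by rw [hdom, pmDom_permPM_constPM]) hφj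
      (hspoke_none v)]
    simp [permPM_constPM_apply, hv]

end Join

theorem stmt15_general [Fintype V] [DecidableEq V] (E : Finset (Finset V))
    (k : ℕ) (hk : 0 < k)
    (F : Finset (Option V → Option (Fin k)))
    (hcov : IsCover (joinOne E) k F)
    (hperf : ∀ e ∈ joinOne E, (F.filter fun φ => pmDom φ = e).card = k)
    (hnorm : ∀ (j : Fin k) (v : V),
      ∃ φ ∈ F, pmDom φ = ({none, some v} : Finset (Option V)) ∧ φ none = some j)
    (hlevel : ∃ j₀ : Fin k, ∀ j : Fin k, j ≠ j₀ → LevelMap E k F j) :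
    (∀ j : Fin k, LevelMap E k F j) ∧ dpCount k F = chromPoly (joinOne E) k := by
  obtain ⟨π, hspoke⟩ := exists_levelPerm hcov hnorm
  obtain ⟨j₀, hj₀⟩ := hlevel
  have hlevels : ∀ e ∈ E, ∀ j, permPM (levelPerm π) (constPM (e.image some) j) ∈ F :=
    fun e he => permPM_constPM_mem_of_forall_ne hcov (hperf _ (mem_joinOne.2 (.inl ⟨e, he, rfl⟩)))
      fun j hj => (levelMap_iff hcov hspoke).1 (hj₀ j hj) e he
  have hall : ∀ d ∈ joinOne E, ∀ j, permPM (levelPerm π) (constPM d j) ∈ F := by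
    intro d hd
    obtain ⟨e, he, rfl⟩ | ⟨v, rfl⟩ := mem_joinOne.1 hd
    exacts [hlevels e he, hspoke v]
  refine ⟨fun j => (levelMap_iff hcov hspoke).2 fun e he => hlevels e he j, ?_⟩
  rw [eq_image_permPM_natCover hcov hk hall, dpCount_image_permPM, dpCount_natCover _ hk]

/-- for a perfect `k`-fold cover `F` of `M = K₁ ∨ H` (normalized so the
cover map on `{w, v}` indexed by `j` sends `w` to `j`), if at least `k-1` of the `Φ_j`
are level mappings, then all of them are, and the number of `F`-colorings of `M`
equals the number of proper `k`-colorings of `M`, i.e. `P_DP(M,F) = P(M,k)`. -/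
theorem stmt15 [Fintype V] [DecidableEq V] (E : Finset (Finset V))
    (hE : ∀ e ∈ E, 2 ≤ e.card) (k : ℕ) (hk : 0 < k)
    (F : Finset (Option V → Option (Fin k)))
    (hcov : IsCover (joinOne E) k F)
    (hperf : ∀ e ∈ joinOne E, (F.filter fun φ => pmDom φ = e).card = k)
    (hnorm : ∀ (j : Fin k) (v : V),
      ∃ φ ∈ F, pmDom φ = ({none, some v} : Finset (Option V)) ∧ φ none = some j)
    (hlevel : ∃ j₀ : Fin k, ∀ j : Fin k, j ≠ j₀ → LevelMap E k F j) :
    (∀ j : Fin k, LevelMap E k F j) ∧ dpCount k F = chromPoly (joinOne E) k :=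
  stmt15_general E k hk F hcov hperf hnorm hlevel
end
end
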